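/- arXiv:1110.4921 — 9 statements merged into one kernel-verified Lean document; each statement's English description precedes it below -/
import Mathlib

section
/- Let G be a residually finite group and let A be a finite set. If X ⊆ A^G is a strongly irreducible subshift of finite type that contains at least one periodic configuration, then the set of periodic configurations in X is dense in X. -/
/-- The shift action of a group `G` on configurations `x : G → A`:
`(g • x)(h) = x(g⁻¹h)`. -/
def shift {G A : Type*} [Group G] (g : G) (x : G → A) : G → A :=
  fun h => x (g⁻¹ * h)

/-- A subshift is a closed, shift-invariant subset of `A^G` (with the prodiscrete topology). -/
def IsSubshift {G A : Type*} [Group G] [TopologicalSpace A] (X : Set (G → A)) : Prop :=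
  IsClosed X ∧ ∀ (g : G) (x : G → A), x ∈ X → shift g x ∈ X

/-- A configuration is periodic if its orbit under the shift action is finite. -/
def IsPeriodicConfig {G A : Type*} [Group G] (x : G → A) : Prop :=
  (Set.range fun g : G => shift g x).Finite

/-- A subshift is of finite type if it is defined by a finite window `Ω` and a set of
allowed patterns `P ⊆ A^Ω`. -/
def IsOfFiniteType {G A : Type*} [Group G] (X : Set (G → A)) : Prop :=
  ∃ (Ω : Finset G) (P : Set ({g : G // g ∈ Ω} → A)),
    X = {x : G → A | ∀ g : G, (fun w : {g : G // g ∈ Ω} => shift g x w.1) ∈ P}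

/-- A subshift is strongly irreducible if there is a finite `Δ ⊆ G` such that any two
patterns of configurations of `X` with supports `Ω₁, Ω₂` satisfying `Ω₁Δ⁻¹ ∩ Ω₂ = ∅`
can be glued inside `X`. -/
def IsStronglyIrreducible {G A : Type*} [Group G] (X : Set (G → A)) : Prop :=
  ∃ Δ : Finset G, ∀ Ω₁ Ω₂ : Finset G,
    (∀ a ∈ Ω₁, ∀ d ∈ Δ, a * d⁻¹ ∉ Ω₂) →
    ∀ x₁ ∈ X, ∀ x₂ ∈ X, ∃ x ∈ X,
      (∀ w ∈ Ω₁, x w = x₁ w) ∧ (∀ w ∈ Ω₂, x w = x₂ w)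

/-- A group is residually finite if the intersection of its finite-index subgroups is
trivial, i.e. every nontrivial element avoids some finite-index subgroup. -/
def ResiduallyFinite (H : Type*) [Group H] : Prop :=
  ∀ h : H, h ≠ 1 → ∃ K : Subgroup H, K.FiniteIndex ∧ h ∉ K

/-!
Fix a periodic `x₀ ∈ X`, with stabilizer of finite index, and a finite `Ω ⊆ G`. Strong
irreducibility and compactness give `z ∈ X` equal to `x` on `Ω` and to `x₀` outside a finite
`E ⊇ Ω`. Residual finiteness gives a finite-index subgroup `K` of the stabilizer of `x₀` whose
translates of `E`, thickened by the window `W` of the finite type, are pairwise disjoint. Copying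
the pattern of `z` on `E` onto every translate `k • E` inside `x₀` yields a `K`-invariant, hence
periodic, configuration that agrees with `x` on `Ω`; it lies in `X` because every window sees
`x₀` and at most one copy of `z`, i.e. it sees a translate of `z`.
-/

open Pointwise

attribute [local instance] arrowAction in
theorem isPeriodicConfig_iff_exists_finiteIndex {G A : Type*} [Group G] {x : G → A} :
    IsPeriodicConfig x ↔ ∃ K : Subgroup G, K.FiniteIndex ∧ ∀ k ∈ K, shift k x = x := by
  have hstab : IsPeriodicConfig x ↔ (MulAction.stabilizer G x).FiniteIndex := by
    rw [Subgroup.finiteIndex_iff, MulAction.index_stabilizer]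
    exact ⟨fun h => Set.ncard_ne_zero_of_mem (MulAction.mem_orbit_self x) h,
      Set.finite_of_ncard_ne_zero⟩
  rw [hstab]
  exact ⟨fun h => ⟨_, h, fun k hk => hk⟩,
    fun ⟨K, _, hKx⟩ => Subgroup.finiteIndex_of_le fun k hk => hKx k hk⟩

theorem ResiduallyFinite.exists_finiteIndex_le {G : Type*} [Group G] (hG : ResiduallyFinite G)
    {H : Subgroup G} (hH : H.FiniteIndex) (F : Finset G) :
    ∃ K ≤ H, K.FiniteIndex ∧ ∀ k ∈ K, k ∈ F → k = 1 := by
  have hsep (t : G) : ∃ L : Subgroup G, L.FiniteIndex ∧ (t ≠ 1 → t ∉ L) := by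
    by_cases ht : t = 1
    · exact ⟨⊤, inferInstance, fun h => (h ht).elim⟩
    · obtain ⟨L, hL, htL⟩ := hG t ht
      exact ⟨L, hL, fun _ => htL⟩
  choose L hL htL using hsep
  have : (⨅ t ∈ F, L t).FiniteIndex := Subgroup.finiteIndex_iInf' L fun t _ => hL t
  refine ⟨H ⊓ ⨅ t ∈ F, L t, inf_le_left, inferInstance, fun k hk hkF => ?_⟩
  by_contra hk1
  exact htL k hk1 (Subgroup.mem_iInf.1 (Subgroup.mem_iInf.1 (Subgroup.mem_inf.1 hk).2 k) hkF)

section Topology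

variable {G A : Type*} [TopologicalSpace A]

theorem mem_closure_of_forall_finset_exists_eq {S : Set (G → A)} {x : G → A}
    (h : ∀ Ω : Finset G, ∃ y ∈ S, ∀ g ∈ Ω, y g = x g) : x ∈ closure S := by
  rw [mem_closure_iff_nhds]
  intro t ht
  rw [nhds_pi, Filter.mem_pi] at ht
  obtain ⟨I, hI, t', ht', hsub⟩ := ht
  obtain ⟨y, hyS, hyx⟩ := h hI.toFinset
  refine ⟨y, hsub fun i hi => ?_, hyS⟩
  rw [hyx i (hI.mem_toFinset.2 hi)]
  exact mem_of_mem_nhds (ht' i)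

variable [DiscreteTopology A]

theorem isClosed_setOf_forall_mem_eq (S : Set G) (x : G → A) :
    IsClosed {y : G → A | ∀ g ∈ S, y g = x g} := by
  simp only [Set.ofPred_forall]
  exact isClosed_biInter fun g _ => isClosed_eq (continuous_apply g) continuous_const

variable [Group G] [Finite A] {X : Set (G → A)}

theorem IsStronglyIrreducible.exists_glue_of_isClosed (hsi : IsStronglyIrreducible X)
    (hX : IsClosed X) :
    ∃ Δ : Finset G, ∀ (Ω₁ : Finset G) (Ω₂ : Set G), (∀ a ∈ Ω₁, ∀ d ∈ Δ, a * d⁻¹ ∉ Ω₂) →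
      ∀ x₁ ∈ X, ∀ x₂ ∈ X, ∃ x ∈ X, (∀ w ∈ Ω₁, x w = x₁ w) ∧ ∀ w ∈ Ω₂, x w = x₂ w := by
  classical
  obtain ⟨Δ, hΔ⟩ := hsi
  refine ⟨Δ, fun Ω₁ Ω₂ hΩ x₁ hx₁ x₂ hx₂ => ?_⟩
  have hcompact : IsCompact (X ∩ {x | ∀ w ∈ Ω₁, x w = x₁ w}) :=
    (hX.inter (isClosed_setOf_forall_mem_eq _ x₁)).isCompact
  obtain ⟨x, ⟨hxX, hx₁⟩, hx₂⟩ := hcompact.inter_iInter_nonempty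
    (fun w : Ω₂ => {x | x w = x₂ w}) (fun w => isClosed_eq (continuous_apply _) continuous_const)
    fun F => by
      obtain ⟨x, hxX, hx₁, hx₂⟩ := hΔ Ω₁ (F.map (Function.Embedding.subtype _))
        (fun a ha d hd h => by
          obtain ⟨w, -, hw⟩ := Finset.mem_map.1 h
          exact hΩ a ha d hd (hw ▸ w.2))
        x₁ hx₁ x₂ hx₂
      exact ⟨x, ⟨hxX, hx₁⟩, Set.mem_iInter₂.2 fun w hw => hx₂ w (Finset.mem_map_of_mem _ hw)⟩
  exact ⟨x, hxX, hx₁, fun w hw => Set.mem_iInter.1 hx₂ ⟨w, hw⟩⟩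

end Topology

theorem IsOfFiniteType.exists_window {G A : Type*} [Group G] {X : Set (G → A)}
    (hft : IsOfFiniteType X) :
    ∃ W : Finset G, 1 ∈ W ∧ ∀ y : G → A,
      (∀ g : G, ∃ x ∈ X, ∀ w ∈ W, y (g * w) = x (g * w)) → y ∈ X := by
  classical
  obtain ⟨W, P, rfl⟩ := hft
  refine ⟨insert 1 W, Finset.mem_insert_self 1 W, fun y hy g => ?_⟩
  obtain ⟨x, hxP, hxy⟩ := hy g⁻¹
  convert hxP g using 2 with w
  exact hxy w (Finset.mem_insert_of_mem w.2)

section Periodization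

variable {G A : Type*} [Group G]

/-- Each translate `g • W` meets at most one of the translates `k • E`, `k ∈ K`. -/
def MeetsAtMostOneTranslate (K : Subgroup G) (E W : Finset G) : Prop :=
  ∀ g : G, ∃ k ∈ K, ∀ k' ∈ K, ∀ w ∈ W, k'⁻¹ * (g * w) ∈ E → k' = k

theorem meetsAtMostOneTranslate_of_forall_mem_eq_one [DecidableEq G] {K : Subgroup G}
    {E W : Finset G} (hK : ∀ k ∈ K, k ∈ E * W⁻¹ * (E * W⁻¹)⁻¹ → k = 1) :
    MeetsAtMostOneTranslate K E W := by
  intro g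
  by_cases h : ∃ k ∈ K, ∃ w ∈ W, k⁻¹ * (g * w) ∈ E
  · obtain ⟨k, hk, w, hw, he⟩ := h
    refine ⟨k, hk, fun k' hk' w' hw' he' => ?_⟩
    have hmem : k'⁻¹ * k ∈ E * W⁻¹ * (E * W⁻¹)⁻¹ := by
      rw [show k'⁻¹ * k = k'⁻¹ * (g * w') * w'⁻¹ * (k⁻¹ * (g * w) * w⁻¹)⁻¹ by group]
      exact Finset.mul_mem_mul (Finset.mul_mem_mul he' (Finset.inv_mem_inv hw'))
        (Finset.inv_mem_inv (Finset.mul_mem_mul he (Finset.inv_mem_inv hw)))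
    exact inv_mul_eq_one.1 (hK _ (K.mul_mem (K.inv_mem hk') hk) hmem)
  · push Not at h
    exact ⟨1, K.one_mem, fun k' hk' w hw he => absurd he (h k' hk' w hw)⟩

theorem MeetsAtMostOneTranslate.exists_forall_eq {K : Subgroup G} {E W : Finset G}
    (h : MeetsAtMostOneTranslate K E W) (hW : 1 ∈ W) (g : G) :
    ∃ k ∈ K, ∀ k' ∈ K, k'⁻¹ * g ∈ E → k' = k := by
  obtain ⟨k, hk, hown⟩ := h g
  exact ⟨k, hk, fun k' hk' he => hown k' hk' 1 hW (by rwa [mul_one])⟩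

open Classical in
/-- Copies the pattern of `z` on `E` onto every translate `k • E`, `k ∈ K`, of the background
`x₀`. -/
noncomputable def periodization (K : Subgroup G) (E : Finset G) (z x₀ : G → A) : G → A :=
  fun g => if h : ∃ k ∈ K, k⁻¹ * g ∈ E then z (h.choose⁻¹ * g) else x₀ g

variable {K : Subgroup G} {E W : Finset G} {z x₀ : G → A}

theorem periodization_apply (hz : ∀ g ∉ E, z g = x₀ g) (hx₀ : ∀ k ∈ K, shift k x₀ = x₀)
    {k g : G} (hk : k ∈ K) (hg : ∀ k' ∈ K, k'⁻¹ * g ∈ E → k' = k) :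
    periodization K E z x₀ g = z (k⁻¹ * g) := by
  unfold periodization
  split_ifs with h
  · rw [hg _ h.choose_spec.1 h.choose_spec.2]
  · push Not at h
    rw [hz _ (h k hk)]
    exact (congrFun (hx₀ k hk) g).symm

theorem shift_periodization (hz : ∀ g ∉ E, z g = x₀ g) (hx₀ : ∀ k ∈ K, shift k x₀ = x₀)
    (hKEW : MeetsAtMostOneTranslate K E W) (hW : 1 ∈ W) {k : G} (hk : k ∈ K) :
    shift k (periodization K E z x₀) = periodization K E z x₀ := by
  funext g
  obtain ⟨k', hk', hown⟩ := hKEW.exists_forall_eq hW g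
  show periodization K E z x₀ (k⁻¹ * g) = periodization K E z x₀ g
  rw [periodization_apply hz hx₀ hk' hown,
    periodization_apply hz hx₀ (K.mul_mem (K.inv_mem hk) hk') fun k'' hk'' he => ?_]
  · group
  · rw [← hown _ (K.mul_mem hk hk'') (by rwa [mul_inv_rev, mul_assoc]), inv_mul_cancel_left]

theorem periodization_eq_of_mem (hz : ∀ g ∉ E, z g = x₀ g) (hx₀ : ∀ k ∈ K, shift k x₀ = x₀)
    (hKEW : MeetsAtMostOneTranslate K E W) (hW : 1 ∈ W) {g : G} (hg : g ∈ E) :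
    periodization K E z x₀ g = z g := by
  obtain ⟨k, hk, hown⟩ := hKEW.exists_forall_eq hW g
  have hk1 : 1 = k := hown 1 K.one_mem (by rwa [inv_one, one_mul])
  rw [periodization_apply hz hx₀ hk hown, ← hk1, inv_one, one_mul]

theorem exists_periodization_eq_shift_on_window (hz : ∀ g ∉ E, z g = x₀ g)
    (hx₀ : ∀ k ∈ K, shift k x₀ = x₀) (hKEW : MeetsAtMostOneTranslate K E W) (g : G) :
    ∃ k ∈ K, ∀ w ∈ W, periodization K E z x₀ (g * w) = shift k z (g * w) := by
  obtain ⟨k, hk, hown⟩ := hKEW g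
  exact ⟨k, hk, fun w hw => periodization_apply hz hx₀ hk fun k' hk' he => hown k' hk' w hw he⟩

end Periodization

/-- If `G` is residually finite, `A` a finite set and `X ⊆ A^G` a strongly irreducible
subshift of finite type containing a periodic configuration, then the periodic
configurations of `X` are dense in `X`. -/
theorem density_of_periodic_configurations
    {G A : Type*} [Group G] [Finite A] [TopologicalSpace A] [DiscreteTopology A]
    (hG : ResiduallyFinite G) (X : Set (G → A))
    (hX : IsSubshift X) (hft : IsOfFiniteType X) (hsi : IsStronglyIrreducible X)
    (hper : ∃ x ∈ X, IsPeriodicConfig x) :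
    X ⊆ closure {x ∈ X | IsPeriodicConfig x} := by
  classical
  intro x hx
  refine mem_closure_of_forall_finset_exists_eq fun Ω => ?_
  obtain ⟨x₀, hx₀X, H, hH, hx₀H⟩ := hper.imp fun _ => And.imp_right
    isPeriodicConfig_iff_exists_finiteIndex.1
  obtain ⟨Δ, hΔ⟩ := hsi.exists_glue_of_isClosed hX.1
  set E := Ω ∪ Ω * Δ⁻¹
  have hΩE : ∀ a ∈ Ω, ∀ d ∈ Δ, a * d⁻¹ ∉ (↑E : Set G)ᶜ := fun a ha d hd h =>
    h (Finset.mem_union_right _ (Finset.mul_mem_mul ha (Finset.inv_mem_inv hd)))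
  obtain ⟨z, hzX, hzx, hz⟩ := hΔ Ω (↑E)ᶜ hΩE x hx x₀ hx₀X
  obtain ⟨W, hW, hWX⟩ := hft.exists_window
  obtain ⟨K, hKH, hK, hKsep⟩ := hG.exists_finiteIndex_le hH (E * W⁻¹ * (E * W⁻¹)⁻¹)
  have hKEW := meetsAtMostOneTranslate_of_forall_mem_eq_one hKsep
  have hx₀ : ∀ k ∈ K, shift k x₀ = x₀ := fun k hk => hx₀H k (hKH hk)
  refine ⟨periodization K E z x₀, ⟨hWX _ fun g => ?_, ?_⟩, fun g hg => ?_⟩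
  · obtain ⟨k, hk, hkz⟩ := exists_periodization_eq_shift_on_window hz hx₀ hKEW g
    exact ⟨shift k z, hX.2 k z hzX, hkz⟩
  · exact isPeriodicConfig_iff_exists_finiteIndex.2
      ⟨K, hK, fun k hk => shift_periodization hz hx₀ hKEW hW hk⟩
  · rw [periodization_eq_of_mem hz hx₀ hKEW hW (Finset.mem_union_left _ hg)]
    exact hzx g hg
end

section
/- Let G be a residually finite group and let A be a finite set. If X ⊆ A^G is a strongly irreducible subshift of finite type containing a periodic configuration, then X is surjunctive, i.e., every injective cellular automaton τ : X → X is surjective. -/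
/-!
Since `X` is compact, `τ(X)` is closed, so it suffices that `τ(X)` contains the periodic
configurations of `X` and that these are dense in `X`. If `y ∈ X` has a stabilizer `H` of finite
index, the `H`-invariant configurations of `X` form a finite set which `τ` maps injectively, hence
surjectively, into itself; so `y ∈ τ(X)`. For density, strong irreducibility glues a pattern
`x|_E` of `x ∈ X` into a periodic `p ∈ X`, and residual finiteness yields a finite-index
`H ≤ Stab(p)` whose translates of the modified region are so far apart that repeating the
modification along `H` creates no pattern that is not already seen in `X`.
-/

open scoped Pointwise

attribute [local instance] arrowAction

section Periodic

variable {G A : Type*} [Group G]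

lemma shift_eq_smul (g : G) (x : G → A) : shift g x = g • x := rfl

lemma smul_config_apply (g : G) (x : G → A) (t : G) : (g • x) t = x (g⁻¹ * t) := rfl

lemma isPeriodicConfig_iff_finiteIndex_stabilizer {x : G → A} :
    IsPeriodicConfig x ↔ (MulAction.stabilizer G x).FiniteIndex := by
  rw [Subgroup.finiteIndex_iff, MulAction.index_stabilizer]
  exact ⟨fun h => Set.ncard_ne_zero_of_mem (MulAction.mem_orbit_self x) h,
    Set.finite_of_ncard_ne_zero⟩

lemma isPeriodicConfig_of_forall_smul_eq {y : G → A} (H : Subgroup G) [H.FiniteIndex]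
    (hy : ∀ h ∈ H, h • y = y) : IsPeriodicConfig y :=
  isPeriodicConfig_iff_finiteIndex_stabilizer.mpr (Subgroup.finiteIndex_of_le hy)

/-- An `H`-invariant configuration factors through the finite set of right cosets `H g`. -/
lemma finite_setOf_forall_smul_eq [Finite A] (H : Subgroup G) [H.FiniteIndex] :
    {y : G → A | ∀ h ∈ H, h • y = y}.Finite := by
  have : Finite (Quotient (QuotientGroup.rightRel H)) :=
    .of_equiv _ (QuotientGroup.quotientRightRelEquivQuotientLeftRel H).symm
  refine (Set.finite_range fun f : Quotient (QuotientGroup.rightRel H) → A =>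
    f ∘ Quotient.mk _).subset fun y hy => ?_
  refine ⟨Quotient.lift y fun a b hab => ?_, rfl⟩
  have := congrFun (hy _ (QuotientGroup.rightRel_apply.mp hab)) b
  rw [smul_config_apply] at this
  simpa using this

lemma mem_image_of_isPeriodicConfig [Finite A] {X : Set (G → A)} {τ : (G → A) → (G → A)}
    (hmaps : Set.MapsTo τ X X) (hequiv : ∀ g : G, ∀ x ∈ X, τ (g • x) = g • τ x)
    (hinj : Set.InjOn τ X) {y : G → A} (hy : y ∈ X) (hper : IsPeriodicConfig y) :
    y ∈ τ '' X := by
  set H := MulAction.stabilizer G y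
  have : H.FiniteIndex := isPeriodicConfig_iff_finiteIndex_stabilizer.mp hper
  set F := X ∩ {z : G → A | ∀ h ∈ H, h • z = z}
  have hF : F.Finite := (finite_setOf_forall_smul_eq H).subset Set.inter_subset_right
  have hmapsF : Set.MapsTo τ F F := fun z hz =>
    ⟨hmaps hz.1, fun h hh => by rw [← hequiv h z hz.1, hz.2 h hh]⟩
  obtain ⟨z, hz, hzy⟩ := ((hF.injOn_iff_bijOn_of_mapsTo hmapsF).mp (hinj.mono
    Set.inter_subset_left)).surjOn ⟨hy, fun h hh => hh⟩
  exact ⟨z, hz.1, hzy⟩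

end Periodic

section FiniteType

variable {G A : Type*} [Group G] {X : Set (G → A)}

lemma IsOfFiniteType.isClosed [TopologicalSpace A] [DiscreteTopology A]
    (hX : IsOfFiniteType X) : IsClosed X := by
  obtain ⟨Ω, P, rfl⟩ := hX
  simp only [Set.ofPred_forall]
  exact isClosed_iInter fun g => (isClosed_discrete P).preimage (by unfold shift; fun_prop)

lemma IsOfFiniteType.smul_mem (hX : IsOfFiniteType X) (g : G) {x : G → A} (hx : x ∈ X) :
    g • x ∈ X := by
  obtain ⟨Ω, P, rfl⟩ := hX
  intro k
  simpa only [shift_eq_smul, smul_smul] using hx (k * g)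

lemma mem_of_forall_exists_eqOn_window {Ω : Finset G} {P : Set ({g : G // g ∈ Ω} → A)}
    (hX : X = {x : G → A | ∀ g : G, (fun w : {g : G // g ∈ Ω} => shift g x w.1) ∈ P})
    {y : G → A} (hy : ∀ g : G, ∃ x ∈ X, ∀ w ∈ Ω, y (g⁻¹ * w) = x (g⁻¹ * w)) : y ∈ X := by
  rw [hX]
  intro g
  obtain ⟨x, hx, hxy⟩ := hy g
  rw [hX] at hx
  convert hx g using 2 with w
  exact hxy w w.2

end FiniteType

section Topology

lemma mem_closure_of_forall_finset_exists_eqOn {ι A : Type*} [TopologicalSpace A]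
    {S : Set (ι → A)} {x : ι → A} (h : ∀ E : Finset ι, ∃ y ∈ S, ∀ i ∈ E, y i = x i) :
    x ∈ closure S := by
  refine mem_closure_iff.mpr fun U hU hxU => ?_
  obtain ⟨E, u, hEu, hsub⟩ := isOpen_pi_iff.mp hU x hxU
  obtain ⟨y, hyS, hyx⟩ := h E
  exact ⟨y, hsub fun i hi => (hyx i hi).symm ▸ (hEu i hi).2, hyS⟩

variable {G A : Type*} [Group G] [Finite A] [TopologicalSpace A] [DiscreteTopology A]
  {X : Set (G → A)}

/-- By compactness, it suffices to glue on every finite part of `Ω₂`. -/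
lemma IsStronglyIrreducible.exists_glue (hsi : IsStronglyIrreducible X) (hXc : IsClosed X) :
    ∃ Δ : Finset G, ∀ (Ω₁ : Finset G) (Ω₂ : Set G), (∀ a ∈ Ω₁, ∀ d ∈ Δ, a * d⁻¹ ∉ Ω₂) →
      ∀ x₁ ∈ X, ∀ x₂ ∈ X, ∃ x ∈ X, (∀ w ∈ Ω₁, x w = x₁ w) ∧ ∀ w ∈ Ω₂, x w = x₂ w := by
  obtain ⟨Δ, hΔ⟩ := hsi
  refine ⟨Δ, fun Ω₁ Ω₂ hdisj x₁ hx₁ x₂ hx₂ => ?_⟩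
  have hclosed : ∀ w : G, ∀ a : A, IsClosed {z : G → A | z w = a} := fun w a =>
    isClosed_eq (continuous_apply w) continuous_const
  have hs : IsClosed (X ∩ ⋂ w ∈ Ω₁, {z : G → A | z w = x₁ w}) :=
    hXc.inter (isClosed_biInter fun w _ => hclosed w (x₁ w))
  obtain ⟨x, ⟨hxX, hx₁⟩, hx₂⟩ := hs.isCompact.inter_iInter_nonempty
    (fun c : Ω₂ => {z : G → A | z c = x₂ c}) (fun c => hclosed c (x₂ c)) fun u => by
      obtain ⟨z, hzX, hz₁, hz₂⟩ := hΔ Ω₁ (u.map (Function.Embedding.subtype _))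
        (fun a ha d hd hmem => by
          obtain ⟨c, -, hc⟩ := Finset.mem_map.mp hmem
          exact hdisj a ha d hd (hc ▸ c.2)) x₁ hx₁ x₂ hx₂
      exact ⟨z, ⟨hzX, Set.mem_iInter₂.mpr hz₁⟩,
        Set.mem_iInter₂.mpr fun c hc => hz₂ c (Finset.mem_map_of_mem _ hc)⟩
  exact ⟨x, hxX, Set.mem_iInter₂.mp hx₁, fun w hw => Set.mem_iInter.mp hx₂ ⟨w, hw⟩⟩

end Topology

section Translates

variable {G : Type*} [Group G]

def PairwiseDisjointTranslates (H : Subgroup G) (S : Set G) : Prop :=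
  ∀ h ∈ H, ∀ s ∈ S, h * s ∈ S → h = 1

variable {H : Subgroup G} {S T : Set G}

lemma PairwiseDisjointTranslates.mono (hT : PairwiseDisjointTranslates H T) (hST : S ⊆ T) :
    PairwiseDisjointTranslates H S :=
  fun h hh s hs hhs => hT h hh s (hST hs) (hST hhs)

lemma PairwiseDisjointTranslates.eq_of_inv_mul_mem (hS : PairwiseDisjointTranslates H S)
    {h h' t : G} (hh : h ∈ H) (hh' : h' ∈ H) (ht : h⁻¹ * t ∈ S) (ht' : h'⁻¹ * t ∈ S) :
    h = h' := by
  have hmem : h'⁻¹ * h * (h⁻¹ * t) ∈ S := by rwa [mul_assoc, mul_inv_cancel_left]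
  exact (inv_mul_eq_one.mp (hS _ (H.mul_mem (H.inv_mem hh') hh) _ ht hmem)).symm

lemma ResiduallyFinite.exists_finiteIndex_le_forall_mem_eq_one (hG : ResiduallyFinite G)
    (F : Finset G) (L : Subgroup G) [L.FiniteIndex] :
    ∃ H ≤ L, H.FiniteIndex ∧ ∀ h ∈ H, h ∈ F → h = 1 := by
  classical
  induction F using Finset.induction_on with
  | empty => exact ⟨L, le_rfl, inferInstance, fun _ _ h => absurd h (Finset.notMem_empty _)⟩
  | insert a F _ ih =>
    obtain ⟨H, hHL, hH, hHF⟩ := ih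
    by_cases ha : a = 1
    · exact ⟨H, hHL, hH, fun h hh hmem => (Finset.mem_insert.mp hmem).elim (· ▸ ha)
        (hHF h hh)⟩
    obtain ⟨K, hK, haK⟩ := hG a ha
    refine ⟨H ⊓ K, inf_le_left.trans hHL, inferInstance, fun h hh hmem => ?_⟩
    rcases Finset.mem_insert.mp hmem with rfl | hF
    · exact absurd hh.2 haK
    · exact hHF h hh.1 hF

lemma ResiduallyFinite.exists_pairwiseDisjointTranslates (hG : ResiduallyFinite G)
    (hS : S.Finite) (L : Subgroup G) [L.FiniteIndex] :
    ∃ H ≤ L, H.FiniteIndex ∧ PairwiseDisjointTranslates H S := by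
  obtain ⟨H, hHL, hH, hHF⟩ :=
    hG.exists_finiteIndex_le_forall_mem_eq_one (hS.mul hS.inv).toFinset L
  refine ⟨H, hHL, hH, fun h hh s hs hhs => hHF h hh ?_⟩
  rw [Set.Finite.mem_toFinset]
  simpa using Set.mul_mem_mul hhs (Set.inv_mem_inv.mpr hs)

end Translates

section Periodize

variable {G A : Type*} [Group G] {H : Subgroup G} {S : Set G} {z p : G → A}

/-- Copy `z|_S` onto every translate `h S`, `h ∈ H`, and fill the rest with `p`. -/
noncomputable def periodize (H : Subgroup G) (S : Set G) (z p : G → A) : G → A := by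
  classical
  exact fun t => if ht : ∃ h ∈ H, h⁻¹ * t ∈ S then z (ht.choose⁻¹ * t) else p t

lemma periodize_apply_of_mem (hS : PairwiseDisjointTranslates H S) {h t : G} (hh : h ∈ H)
    (ht : h⁻¹ * t ∈ S) : periodize H S z p t = z (h⁻¹ * t) := by
  have hex : ∃ h ∈ H, h⁻¹ * t ∈ S := ⟨h, hh, ht⟩
  rw [periodize, dif_pos hex, hS.eq_of_inv_mul_mem hex.choose_spec.1 hh hex.choose_spec.2 ht]

lemma periodize_apply_of_forall_notMem {t : G} (ht : ∀ h ∈ H, h⁻¹ * t ∉ S) :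
    periodize H S z p t = p t := by
  rw [periodize, dif_neg fun ⟨h, hh, hmem⟩ => ht h hh hmem]

lemma smul_periodize (hS : PairwiseDisjointTranslates H S) (hp : ∀ h ∈ H, h • p = p)
    {h : G} (hh : h ∈ H) : h • periodize H S z p = periodize H S z p := by
  funext t
  rw [smul_config_apply]
  by_cases hex : ∃ h' ∈ H, h'⁻¹ * (h⁻¹ * t) ∈ S
  · obtain ⟨h', hh', hmem⟩ := hex
    rw [periodize_apply_of_mem hS hh' hmem,
      periodize_apply_of_mem hS (H.mul_mem hh hh') (by rwa [mul_inv_rev, mul_assoc]),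
      mul_inv_rev, mul_assoc]
  · push Not at hex
    rw [periodize_apply_of_forall_notMem hex, periodize_apply_of_forall_notMem fun h' hh' => by
      simpa [mul_assoc] using hex (h⁻¹ * h') (H.mul_mem (H.inv_mem hh) hh'),
      ← smul_config_apply h p, hp h hh]

/-- Off `S`, `z` agrees with the `H`-invariant `p`. -/
lemma periodize_apply_of_mem_mul {N : Set G} (hS : PairwiseDisjointTranslates H (S ∪ S * N))
    (hp : ∀ h ∈ H, h • p = p) (hzp : ∀ t ∉ S, z t = p t) {h t : G} (hh : h ∈ H)
    (ht : h⁻¹ * t ∈ S * N) : periodize H S z p t = z (h⁻¹ * t) := by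
  by_cases hex : ∃ h' ∈ H, h'⁻¹ * t ∈ S
  · obtain ⟨h', hh', hmem⟩ := hex
    obtain rfl : h' = h := hS.eq_of_inv_mul_mem hh' hh (Or.inl hmem) (Or.inr ht)
    exact periodize_apply_of_mem (hS.mono Set.subset_union_left) hh' hmem
  · push Not at hex
    rw [periodize_apply_of_forall_notMem hex, hzp _ (hex h hh), ← smul_config_apply h p, hp h hh]

lemma periodize_mem {X : Set (G → A)} {Ω : Finset G} {P : Set ({g : G // g ∈ Ω} → A)}
    (hX : X = {x : G → A | ∀ g : G, (fun w : {g : G // g ∈ Ω} => shift g x w.1) ∈ P})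
    (hz : z ∈ X) (hp : p ∈ X) (hpH : ∀ h ∈ H, h • p = p) (hzp : ∀ t ∉ S, z t = p t)
    (hS : PairwiseDisjointTranslates H (S ∪ S * ((Ω : Set G)⁻¹ * Ω))) :
    periodize H S z p ∈ X := by
  refine mem_of_forall_exists_eqOn_window hX fun g => ?_
  by_cases hex : ∃ h ∈ H, ∃ ω ∈ Ω, h⁻¹ * (g⁻¹ * ω) ∈ S
  · obtain ⟨h, hh, ω, hω, hmem⟩ := hex
    refine ⟨h • z, IsOfFiniteType.smul_mem ⟨Ω, P, hX⟩ h hz, fun w hw => ?_⟩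
    refine periodize_apply_of_mem_mul hS hpH hzp hh ?_
    have := Set.mul_mem_mul hmem (Set.mul_mem_mul (Set.inv_mem_inv.mpr hω) hw)
    simpa [mul_assoc] using this
  · push Not at hex
    exact ⟨p, hp, fun w hw => periodize_apply_of_forall_notMem fun h hh => hex h hh w hw⟩

end Periodize

section Density

variable {G A : Type*} [Group G] [Finite A] [TopologicalSpace A] [DiscreteTopology A]

theorem subset_closure_setOf_isPeriodicConfig (hG : ResiduallyFinite G) {X : Set (G → A)}
    (hft : IsOfFiniteType X) (hsi : IsStronglyIrreducible X)
    (hper : ∃ p ∈ X, IsPeriodicConfig p) : X ⊆ closure {y | y ∈ X ∧ IsPeriodicConfig y} := by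
  intro x hx
  obtain ⟨p, hp, hpper⟩ := hper
  obtain ⟨Ω, P, hXeq⟩ := id hft
  obtain ⟨Δ, hΔ⟩ := hsi.exists_glue hft.isClosed
  refine mem_closure_of_forall_finset_exists_eqOn fun E => ?_
  set S : Set G := E ∪ E * (Δ : Set G)⁻¹
  have hSfin : (S ∪ S * ((Ω : Set G)⁻¹ * Ω)).Finite := by
    have hS : S.Finite := E.finite_toSet.union (E.finite_toSet.mul Δ.finite_toSet.inv)
    exact hS.union (hS.mul (Ω.finite_toSet.inv.mul Ω.finite_toSet))
  obtain ⟨z, hzX, hzx, hzp⟩ := hΔ E Sᶜ (fun a ha d hd hS =>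
    hS (Or.inr (Set.mul_mem_mul ha (Set.inv_mem_inv.mpr hd)))) x hx p hp
  have := isPeriodicConfig_iff_finiteIndex_stabilizer.mp hpper
  obtain ⟨H, hHp, hH, hHS⟩ := hG.exists_pairwiseDisjointTranslates hSfin (MulAction.stabilizer G p)
  have hpH : ∀ h ∈ H, h • p = p := fun h hh => hHp hh
  refine ⟨periodize H S z p, ⟨periodize_mem hXeq hzX hp hpH hzp hHS,
    isPeriodicConfig_of_forall_smul_eq H fun h hh =>
      smul_periodize (hHS.mono Set.subset_union_left) hpH hh⟩, fun w hw => ?_⟩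
  rw [periodize_apply_of_mem (hHS.mono Set.subset_union_left) H.one_mem (by simp [S, hw]),
    inv_one, one_mul, hzx w hw]

end Density

theorem strongly_irreducible_sft_surjunctive_general
    {G A : Type*} [Group G] [Finite A] [TopologicalSpace A] [DiscreteTopology A]
    (hG : ResiduallyFinite G) (X : Set (G → A))
    (hft : IsOfFiniteType X) (hsi : IsStronglyIrreducible X)
    (hper : ∃ x ∈ X, IsPeriodicConfig x)
    (τ : (G → A) → (G → A)) (hmaps : Set.MapsTo τ X X) (hcont : ContinuousOn τ X)
    (hequiv : ∀ g : G, ∀ x ∈ X, τ (shift g x) = shift g (τ x))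
    (hinj : Set.InjOn τ X) :
    X ⊆ τ '' X := by
  have himage : IsClosed (τ '' X) := (hft.isClosed.isCompact.image_of_continuousOn hcont).isClosed
  exact (subset_closure_setOf_isPeriodicConfig hG hft hsi hper).trans <|
    himage.closure_subset_iff.mpr fun y hy =>
      mem_image_of_isPeriodicConfig hmaps hequiv hinj hy.1 hy.2

/-- If `G` is residually finite, `A` a finite set and `X ⊆ A^G` a strongly irreducible
subshift of finite type containing a periodic configuration, then `X` is surjunctive:
every injective cellular automaton (continuous `G`-equivariant self-map) `τ : X → X`
is surjective. -/
theorem strongly_irreducible_sft_surjunctive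
    {G A : Type*} [Group G] [Finite A] [TopologicalSpace A] [DiscreteTopology A]
    (hG : ResiduallyFinite G) (X : Set (G → A))
    (hX : IsSubshift X) (hft : IsOfFiniteType X) (hsi : IsStronglyIrreducible X)
    (hper : ∃ x ∈ X, IsPeriodicConfig x)
    (τ : (G → A) → (G → A)) (hmaps : Set.MapsTo τ X X) (hcont : ContinuousOn τ X)
    (hequiv : ∀ g : G, ∀ x ∈ X, τ (shift g x) = shift g (τ x))
    (hinj : Set.InjOn τ X) :
    X ⊆ τ '' X :=
  strongly_irreducible_sft_surjunctive_general hG X hft hsi hper τ hmaps hcont hequiv hinj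
end

section
/- Let A be a finite set and let X ⊆ A^ℤ be a strongly irreducible subshift. Then X is surjunctive: every injective continuous shift-equivariant map τ : X → X is surjective. -/
/-- The shift action of `ℤ` on configurations `x : ℤ → A`: `(n • x)(m) = x(m - n)`. -/
def shiftZ {A : Type*} (n : ℤ) (x : ℤ → A) : ℤ → A :=
  fun m => x (m - n)

/-- A subshift is a closed, shift-invariant subset of `A^ℤ` (with the prodiscrete
topology). -/
def IsSubshiftZ {A : Type*} [TopologicalSpace A] (X : Set (ℤ → A)) : Prop :=
  IsClosed X ∧ ∀ (n : ℤ) (x : ℤ → A), x ∈ X → shiftZ n x ∈ X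

/-- A configuration is periodic if its orbit under the shift action is finite. -/
def IsPeriodicZ {A : Type*} (x : ℤ → A) : Prop :=
  (Set.range fun n : ℤ => shiftZ n x).Finite

/-- A subshift `X ⊆ A^ℤ` is strongly irreducible if there is a finite `Δ ⊆ ℤ` such
that whenever `Ω₁, Ω₂` are finite subsets of `ℤ` with `(Ω₁ - Δ) ∩ Ω₂ = ∅`, any two
configurations of `X` can be glued along `Ω₁` and `Ω₂` inside `X`. -/
def IsStronglyIrreducibleZ {A : Type*} (X : Set (ℤ → A)) : Prop :=
  ∃ Δ : Finset ℤ, ∀ Ω₁ Ω₂ : Finset ℤ,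
    (∀ a ∈ Ω₁, ∀ d ∈ Δ, a - d ∉ Ω₂) →
    ∀ x₁ ∈ X, ∀ x₂ ∈ X, ∃ x ∈ X,
      (∀ i ∈ Ω₁, x i = x₁ i) ∧ (∀ i ∈ Ω₂, x i = x₂ i)

/-- The word `w` appears as a subword of the configuration `x : ℤ → A`. -/
def AppearsIn {A : Type*} (w : List A) (x : ℤ → A) : Prop :=
  ∃ i : ℤ, ∀ k : Fin w.length, x (i + (k.1 : ℤ)) = w.get k

/-- The language of `X ⊆ A^ℤ`: all finite words appearing in configurations of `X`. -/
def lang {A : Type*} (X : Set (ℤ → A)) : Set (List A) :=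
  {w : List A | ∃ x ∈ X, AppearsIn w x}

/-!
Suppose `x₀ ∈ X` is not in the subshift `Y = τ '' X`. By compactness there is a radius `c` such that
the word of `x₀` on `[-c, c]` occurs nowhere in `Y`, and a radius `s` such that `τ x` on
`[n - s, n + s]` determines `x n`; the latter gives `|P_X(I)| ≤ |A| ^ (2 s) |P_Y(I)|` for the sets
`P_Z(I)` of patterns of `Z` on an interval `I`.

Conversely, cut `I` into `k` cells, wide enough compared with the gluing gap `g` of strong
irreducibility that the forbidden word can be glued into the core of any set `S` of cells of a
configuration of `Y` without touching it outside these cells. The resulting `X`-patterns have marked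
cells exactly `S`, and `Y`-patterns are recovered from them up to the contents of the cells in `S`.
Summing over `S` gives `|P_Y(I)| (D + 1) ^ k ≤ |P_X(I)| D ^ k` with `D = |A| ^ |cell|`, which
contradicts the first bound for large `k`.
-/

theorem Set.ncard_image_le_ncard_image_of_eq_imp {α β γ : Type*} {s : Set α} {f : α → β}
    {g : α → γ} (h : ∀ a ∈ s, ∀ b ∈ s, g a = g b → f a = f b) (hg : (g '' s).Finite) :
    (f '' s).ncard ≤ (g '' s).ncard := by
  rcases s.eq_empty_or_nonempty with rfl | ⟨a, -⟩
  · simp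
  have : Nonempty α := ⟨a⟩
  refine Set.ncard_le_ncard_of_injOn (fun v => g (Function.invFunOn f s v)) ?_ ?_ hg
  · rintro _ ⟨a, ha, rfl⟩
    exact Set.mem_image_of_mem g (Function.invFunOn_mem ⟨a, ha, rfl⟩)
  · rintro _ ⟨a, ha, rfl⟩ _ ⟨b, hb, rfl⟩ hab
    rw [← Function.invFunOn_eq (f := f) ⟨a, ha, rfl⟩, ← Function.invFunOn_eq (f := f) ⟨b, hb, rfl⟩]
    exact h _ (Function.invFunOn_mem ⟨a, ha, rfl⟩) _ (Function.invFunOn_mem ⟨b, hb, rfl⟩) hab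

theorem Set.sum_ncard_image_fiber_le {α β κ : Type*} [Finite β] (s : Set α) (f : α → β)
    (μ : α → κ) (t : Finset κ) (h : ∀ a ∈ s, ∀ b ∈ s, f a = f b → μ a = μ b) :
    ∑ k ∈ t, (f '' {a ∈ s | μ a = k}).ncard ≤ (f '' s).ncard := by
  have hdisj : (t : Set κ).PairwiseDisjoint fun k => f '' {a ∈ s | μ a = k} := by
    rintro k - k' - hkk'
    refine Set.disjoint_left.2 ?_
    rintro _ ⟨a, ⟨ha, rfl⟩, rfl⟩ ⟨b, ⟨hb, rfl⟩, hab⟩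
    exact hkk' (h a ha b hb hab.symm)
  rw [← finsum_mem_coe_finset, ← (t.finite_toSet).ncard_biUnion (fun _ _ => Set.toFinite _) hdisj]
  refine Set.ncard_le_ncard ?_ (Set.toFinite _)
  simp only [Set.iUnion_subset_iff]
  exact fun k _ => Set.image_mono (Set.sep_subset _ _)

theorem mul_add_one_pow_le_of_forall_subset {κ : Type*} (t : Finset κ) {m n D : ℕ}
    (N : Finset κ → ℕ) (hN : ∑ S ∈ t.powerset, N S ≤ n)
    (hm : ∀ S ⊆ t, m ≤ N S * D ^ S.card) : m * (D + 1) ^ t.card ≤ n * D ^ t.card := by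
  calc m * (D + 1) ^ t.card = ∑ S ∈ t.powerset, m * D ^ (t.card - S.card) := by
        rw [← Finset.mul_sum, add_comm, ← Finset.sum_pow_mul_eq_add_pow]
        simp
    _ ≤ ∑ S ∈ t.powerset, N S * D ^ t.card := by
        refine Finset.sum_le_sum fun S hS => ?_
        have hS := Finset.mem_powerset.1 hS
        calc m * D ^ (t.card - S.card) ≤ N S * D ^ S.card * D ^ (t.card - S.card) := by
              exact Nat.mul_le_mul_right _ (hm S hS)
          _ = N S * D ^ t.card := by
              rw [mul_assoc, ← pow_add, Nat.add_sub_cancel' (Finset.card_le_card hS)]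
    _ = (∑ S ∈ t.powerset, N S) * D ^ t.card := (Finset.sum_mul ..).symm
    _ ≤ n * D ^ t.card := by gcongr

theorem exists_mul_pow_lt_add_one_pow (C D : ℕ) : ∃ k : ℕ, C * D ^ k < (D + 1) ^ k := by
  rcases Nat.eq_zero_or_pos D with rfl | hD
  · exact ⟨1, by simp⟩
  have hD' : (0 : ℝ) < D := by exact_mod_cast hD
  obtain ⟨k, hk⟩ := pow_unbounded_of_one_lt (C : ℝ) ((one_lt_div hD').2 (lt_add_one (D : ℝ)))
  refine ⟨k, ?_⟩
  rw [div_pow, lt_div_iff₀ (by positivity)] at hk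
  exact_mod_cast hk

section Patterns

variable {ι A : Type*}

def patterns (Z : Set (ι → A)) (Ω : Finset ι) : Set (Ω → A) :=
  (fun z (i : Ω) => z i) '' Z

theorem patterns_subset_patterns {Z Z' : Set (ι → A)} {Ω : Finset ι}
    (h : ∀ z ∈ Z, ∃ z' ∈ Z', ∀ i ∈ Ω, z i = z' i) : patterns Z Ω ⊆ patterns Z' Ω := by
  rintro _ ⟨z, hz, rfl⟩
  obtain ⟨z', hz', hzz'⟩ := h z hz
  exact ⟨z', hz', funext fun i => (hzz' i i.2).symm⟩

variable [Finite A]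

theorem ncard_patterns_le_ncard_patterns_image {κ : Type*} (X : Set (ι → A))
    (τ : (ι → A) → κ → A) {Ω : Finset ι} {Ω' : Finset κ}
    (h : ∀ x ∈ X, ∀ x' ∈ X, (∀ i ∈ Ω', τ x i = τ x' i) → ∀ i ∈ Ω, x i = x' i) :
    (patterns X Ω).ncard ≤ (patterns (τ '' X) Ω').ncard := by
  rw [patterns, patterns, Set.image_image]
  refine Set.ncard_image_le_ncard_image_of_eq_imp (fun x hx x' hx' hxx' => ?_) (Set.toFinite _)
  exact funext fun i => h x hx x' hx' (fun j hj => congrFun hxx' ⟨j, hj⟩) i i.2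

theorem ncard_patterns_mono (Z : Set (ι → A)) {Ω Ω' : Finset ι} (h : Ω ⊆ Ω') :
    (patterns Z Ω).ncard ≤ (patterns Z Ω').ncard := by
  simpa using ncard_patterns_le_ncard_patterns_image Z id fun _ _ _ _ hzz' i hi => hzz' i (h hi)

theorem ncard_patterns_le_mul [DecidableEq ι] (Z : Set (ι → A)) {Ω Ω' : Finset ι}
    (E : Finset ι) (h : Ω ⊆ Ω' ∪ E) :
    (patterns Z Ω).ncard ≤ (patterns Z Ω').ncard * Nat.card A ^ E.card := by
  calc (patterns Z Ω).ncard
      ≤ ((fun z => ((fun i : Ω' => z i), fun i : E => z i)) '' Z).ncard := by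
        refine Set.ncard_image_le_ncard_image_of_eq_imp ?_ (Set.toFinite _)
        intro z _ z' _ hzz'
        simp only [Prod.mk.injEq, funext_iff, Subtype.forall] at hzz'
        funext ⟨i, hi⟩
        rcases Finset.mem_union.1 (h hi) with hi | hi
        exacts [hzz'.1 i hi, hzz'.2 i hi]
    _ ≤ (patterns Z Ω' ×ˢ (Set.univ : Set (E → A))).ncard := by
        refine Set.ncard_le_ncard ?_ (Set.toFinite _)
        rintro _ ⟨z, hz, rfl⟩
        exact ⟨⟨z, hz, rfl⟩, Set.mem_univ _⟩
    _ = (patterns Z Ω').ncard * Nat.card A ^ E.card := by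
        rw [Set.ncard_prod, Set.ncard_univ, Nat.card_fun, Nat.card_eq_finsetCard]

theorem ncard_patterns_mul_pow_le_of_marking [Nonempty A] {κ : Type*}
    (X Y : Set (ι → A)) (I : Finset ι) (J : Finset κ) (E : κ → Finset ι) (T : ℕ)
    (hE : ∀ j ∈ J, (E j).card ≤ T) (marked : κ → (ι → A) → Prop)
    (hlocal : ∀ x x' : ι → A, (∀ i ∈ I, x i = x' i) → ∀ j ∈ J, (marked j x ↔ marked j x'))
    (hmark : ∀ S ⊆ J, ∀ y ∈ Y, ∃ x ∈ X, (∀ j ∈ J, (marked j x ↔ j ∈ S)) ∧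
      ∀ i ∈ I, (∀ j ∈ S, i ∉ E j) → x i = y i) :
    (patterns Y I).ncard * (Nat.card A ^ T + 1) ^ J.card ≤
      (patterns X I).ncard * (Nat.card A ^ T) ^ J.card := by
  classical
  let markedSet (x : ι → A) : Finset κ := J.filter (marked · x)
  refine mul_add_one_pow_le_of_forall_subset J
    (fun S => (patterns {x ∈ X | markedSet x = S} I).ncard) ?_ fun S hS => ?_
  · refine Set.sum_ncard_image_fiber_le X _ markedSet _ fun x _ x' _ hxx' => ?_
    exact Finset.filter_congr fun j hj =>
      hlocal x x' (fun i hi => congrFun hxx' ⟨i, hi⟩) j hj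
  set Ω := I.filter fun i => ∀ j ∈ S, i ∉ E j
  have hcover : I ⊆ Ω ∪ S.biUnion E := fun i hi => by
    by_cases h : ∀ j ∈ S, i ∉ E j
    · exact Finset.mem_union_left _ (Finset.mem_filter.2 ⟨hi, h⟩)
    · push Not at h
      exact Finset.mem_union_right _ (Finset.mem_biUnion.2 h)
  have hglue : patterns Y Ω ⊆ patterns {x ∈ X | markedSet x = S} Ω := by
    refine patterns_subset_patterns fun y hy => ?_
    obtain ⟨x, hx, hxS, hxy⟩ := hmark S hS y hy
    refine ⟨x, ⟨hx, ?_⟩, fun i hi => ?_⟩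
    · ext j
      simp only [markedSet, Finset.mem_filter]
      exact ⟨fun h => (hxS j h.1).1 h.2, fun h => ⟨hS h, (hxS j (hS h)).2 h⟩⟩
    · obtain ⟨hiI, hiE⟩ := Finset.mem_filter.1 hi
      exact (hxy i hiI hiE).symm
  have hcard : (S.biUnion E).card ≤ T * S.card := by
    rw [mul_comm]
    exact Finset.card_biUnion_le_card_mul S E T fun j hj => hE j (hS hj)
  calc (patterns Y I).ncard ≤ (patterns Y Ω).ncard * Nat.card A ^ (S.biUnion E).card :=
        ncard_patterns_le_mul Y _ hcover
    _ ≤ (patterns {x ∈ X | markedSet x = S} I).ncard * (Nat.card A ^ T) ^ S.card := by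
        rw [← pow_mul]
        gcongr
        · exact (Set.ncard_le_ncard hglue (Set.toFinite _)).trans
            (ncard_patterns_mono _ (Finset.filter_subset _ _))
        · exact Nat.card_pos

end Patterns

section Topology

variable {ι κ A : Type*} [TopologicalSpace A] [DiscreteTopology A]

theorem IsCompact.exists_finset_forall_exists_apply_ne {α : Type*} [TopologicalSpace α]
    {K : Set α} (hK : IsCompact K) {f g : α → ι → A} (hf : Continuous f) (hg : Continuous g)
    (hne : ∀ p ∈ K, f p ≠ g p) : ∃ F : Finset ι, ∀ p ∈ K, ∃ i ∈ F, f p i ≠ g p i := by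
  obtain ⟨F, hF⟩ := hK.elim_finite_subcover (fun i => {p | f p i ≠ g p i})
    (fun i => isOpen_ne_fun ((continuous_apply i).comp hf) ((continuous_apply i).comp hg))
    (fun p hp => Set.mem_iUnion.2 (Function.ne_iff.1 (hne p hp)))
  refine ⟨F, fun p hp => ?_⟩
  simpa using hF hp

theorem IsCompact.exists_finset_forall_eq_of_injOn {X : Set (ι → A)} (hX : IsCompact X)
    {τ : (ι → A) → κ → A} (hτ : ContinuousOn τ X) (hinj : Set.InjOn τ X) (i₀ : ι) :
    ∃ F : Finset κ, ∀ x ∈ X, ∀ x' ∈ X, (∀ i ∈ F, τ x i = τ x' i) → x i₀ = x' i₀ := by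
  set P := {p ∈ X ×ˢ X | p.1 i₀ ≠ p.2 i₀}
  have hP : IsCompact P := (hX.prod hX).inter_right <|
    (isClosed_discrete {q : A × A | q.1 ≠ q.2}).preimage (f := fun p : (ι → A) × (ι → A) =>
      (p.1 i₀, p.2 i₀)) (by fun_prop)
  have hK : IsCompact (Prod.map τ τ '' P) :=
    hP.image_of_continuousOn ((hτ.prodMap hτ).mono fun _ hp => hp.1)
  obtain ⟨F, hF⟩ := hK.exists_finset_forall_exists_apply_ne continuous_fst continuous_snd <| by
    rintro _ ⟨⟨x, x'⟩, ⟨⟨hx, hx'⟩, hne⟩, rfl⟩ hττ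
    exact hne (congrFun (hinj hx hx' hττ) i₀)
  refine ⟨F, fun x hx x' hx' hτF => ?_⟩
  by_contra hne
  obtain ⟨i, hi, hτi⟩ := hF _ ⟨(x, x'), ⟨⟨hx, hx'⟩, hne⟩, rfl⟩
  exact hτi (hτF i hi)

end Topology

section Subshift

variable {A : Type*} [TopologicalSpace A] [Finite A] {X : Set (ℤ → A)}

theorem IsSubshiftZ.isCompact (hX : IsSubshiftZ X) : IsCompact X :=
  hX.1.isCompact

variable [DiscreteTopology A]

theorem IsSubshiftZ.image (hX : IsSubshiftZ X) {τ : (ℤ → A) → ℤ → A} (hτ : ContinuousOn τ X)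
    (hequiv : ∀ n : ℤ, ∀ x ∈ X, τ (shiftZ n x) = shiftZ n (τ x)) : IsSubshiftZ (τ '' X) := by
  refine ⟨(hX.isCompact.image_of_continuousOn hτ).isClosed, ?_⟩
  rintro n _ ⟨x, hx, rfl⟩
  exact ⟨shiftZ n x, hX.2 n x hx, hequiv n x hx⟩

theorem IsSubshiftZ.exists_forall_exists_ne_shiftZ (hX : IsSubshiftZ X) {x₀ : ℤ → A}
    (hx₀ : x₀ ∉ X) :
    ∃ c : ℕ, ∀ x ∈ X, ∀ n : ℤ, ∃ i ∈ Finset.Icc (n - c) (n + c), x i ≠ shiftZ n x₀ i := by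
  obtain ⟨F, hF⟩ := hX.isCompact.exists_finset_forall_exists_apply_ne continuous_id
    continuous_const fun x hx (hxx₀ : x = x₀) => hx₀ (hxx₀ ▸ hx)
  refine ⟨F.sup Int.natAbs, fun x hx n => ?_⟩
  obtain ⟨m, hm, hne⟩ := hF _ (hX.2 (-n) x hx)
  have hmc : m.natAbs ≤ F.sup Int.natAbs := Finset.le_sup hm
  refine ⟨m + n, Finset.mem_Icc.2 ⟨by omega, by omega⟩, ?_⟩
  simpa [shiftZ] using hne

theorem IsSubshiftZ.exists_forall_eq_of_injOn (hX : IsSubshiftZ X) {τ : (ℤ → A) → ℤ → A}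
    (hτ : ContinuousOn τ X) (hequiv : ∀ n : ℤ, ∀ x ∈ X, τ (shiftZ n x) = shiftZ n (τ x))
    (hinj : Set.InjOn τ X) :
    ∃ s : ℕ, ∀ x ∈ X, ∀ x' ∈ X, ∀ n : ℤ,
      (∀ i ∈ Finset.Icc (n - s) (n + s), τ x i = τ x' i) → x n = x' n := by
  obtain ⟨F, hF⟩ := hX.isCompact.exists_finset_forall_eq_of_injOn hτ hinj 0
  refine ⟨F.sup Int.natAbs, fun x hx x' hx' n hττ => ?_⟩
  have h := hF _ (hX.2 (-n) x hx) _ (hX.2 (-n) x' hx') fun m hm => by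
    have hms : m.natAbs ≤ F.sup Int.natAbs := Finset.le_sup hm
    rw [hequiv _ x hx, hequiv _ x' hx']
    simpa [shiftZ] using hττ (m + n) (Finset.mem_Icc.2 ⟨by omega, by omega⟩)
  simpa [shiftZ] using h

end Subshift

theorem ncard_patterns_Ico_le_mul_of_radius {A : Type*} [Finite A] [Nonempty A]
    {X : Set (ℤ → A)} {τ : (ℤ → A) → ℤ → A} {s : ℕ}
    (hs : ∀ x ∈ X, ∀ x' ∈ X, ∀ n : ℤ,
      (∀ i ∈ Finset.Icc (n - s) (n + s), τ x i = τ x' i) → x n = x' n) (a b : ℤ) :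
    (patterns X (Finset.Ico a b)).ncard ≤
      (patterns (τ '' X) (Finset.Ico a b)).ncard * Nat.card A ^ (2 * s) := by
  calc (patterns X (Finset.Ico a b)).ncard
      ≤ (patterns (τ '' X) (Finset.Ico (a - s) (b + s))).ncard := by
        refine ncard_patterns_le_ncard_patterns_image X τ fun x hx x' hx' hxx' n hn =>
          hs x hx x' hx' n fun i hi => hxx' i ?_
        simp only [Finset.mem_Ico, Finset.mem_Icc] at hn hi ⊢
        omega
    _ ≤ (patterns (τ '' X) (Finset.Ico a b)).ncard *
          Nat.card A ^ (Finset.Ico (a - s) a ∪ Finset.Ico b (b + s)).card := by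
        refine ncard_patterns_le_mul _ _ fun i hi => ?_
        simp only [Finset.mem_union, Finset.mem_Ico] at hi ⊢
        omega
    _ ≤ (patterns (τ '' X) (Finset.Ico a b)).ncard * Nat.card A ^ (2 * s) := by
        gcongr
        · exact Nat.card_pos
        · refine (Finset.card_union_le _ _).trans ?_
          simp only [Int.card_Ico]
          omega

section Gluing

variable {A : Type*} {X : Set (ℤ → A)}

def GluingGap (X : Set (ℤ → A)) (g : ℕ) : Prop :=
  ∀ Ω₁ Ω₂ : Finset ℤ, (∀ a ∈ Ω₁, ∀ b ∈ Ω₂, g < (a - b).natAbs) →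
    ∀ x₁ ∈ X, ∀ x₂ ∈ X, ∃ x ∈ X, (∀ i ∈ Ω₁, x i = x₁ i) ∧ ∀ i ∈ Ω₂, x i = x₂ i

theorem IsStronglyIrreducibleZ.exists_gluingGap (h : IsStronglyIrreducibleZ X) :
    ∃ g, GluingGap X g := by
  obtain ⟨Δ, hΔ⟩ := h
  refine ⟨Δ.sup Int.natAbs, fun Ω₁ Ω₂ hsep => hΔ Ω₁ Ω₂ fun a ha d hd had => ?_⟩
  have hgap := hsep a ha _ had
  have hd : d.natAbs ≤ Δ.sup Int.natAbs := Finset.le_sup hd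
  omega

theorem GluingGap.exists_forall_eq {g : ℕ} (hX : GluingGap X g) {κ : Type*}
    (J : Finset κ) (B : κ → Finset ℤ) (x : κ → ℤ → A) (hx : ∀ j ∈ J, x j ∈ X)
    (hB : ∀ j ∈ J, ∀ j' ∈ J, j ≠ j' → ∀ a ∈ B j, ∀ b ∈ B j', g < (a - b).natAbs)
    (Ω : Finset ℤ) (hΩ : ∀ j ∈ J, ∀ a ∈ Ω, ∀ b ∈ B j, g < (a - b).natAbs) {y : ℤ → A}
    (hy : y ∈ X) : ∃ z ∈ X, (∀ j ∈ J, ∀ i ∈ B j, z i = x j i) ∧ ∀ i ∈ Ω, z i = y i := by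
  classical
  induction J using Finset.induction_on with
  | empty => exact ⟨y, hy, by simp, fun _ _ => rfl⟩
  | insert j J hj ih =>
    obtain ⟨z, hz, hzB, hzΩ⟩ := ih (fun j' hj' => hx j' (Finset.mem_insert_of_mem hj'))
      (fun j₁ hj₁ j₂ hj₂ => hB j₁ (Finset.mem_insert_of_mem hj₁) j₂ (Finset.mem_insert_of_mem hj₂))
      (fun j' hj' => hΩ j' (Finset.mem_insert_of_mem hj'))
    have hsep : ∀ a ∈ Ω ∪ J.biUnion B, ∀ b ∈ B j, g < (a - b).natAbs := by
      intro a ha b hb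
      rcases Finset.mem_union.1 ha with ha | ha
      · exact hΩ j (Finset.mem_insert_self j J) a ha b hb
      · obtain ⟨j', hj', ha⟩ := Finset.mem_biUnion.1 ha
        exact hB j' (Finset.mem_insert_of_mem hj') j (Finset.mem_insert_self j J)
          (ne_of_mem_of_not_mem hj' hj) a ha b hb
    obtain ⟨w, hw, hwz, hwx⟩ := hX _ _ hsep z hz (x j) (hx j (Finset.mem_insert_self j J))
    refine ⟨w, hw, fun j' hj' i hi => ?_, fun i hi => ?_⟩
    · rcases Finset.mem_insert.1 hj' with rfl | hj'
      · exact hwx i hi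
      · rw [hwz i (Finset.mem_union_right _ (Finset.mem_biUnion.2 ⟨j', hj', hi⟩)), hzB j' hj' i hi]
    · rw [hwz i (Finset.mem_union_left _ hi), hzΩ i hi]

end Gluing

noncomputable section Cells

def cell (c g j : ℕ) : Finset ℤ :=
  Finset.Ico (j * (2 * c + 2 * g + 1)) (j * (2 * c + 2 * g + 1) + (2 * c + 2 * g + 1))

def cellCenter (c g j : ℕ) : ℤ :=
  j * (2 * c + 2 * g + 1) + g + c

def cellCore (c g j : ℕ) : Finset ℤ :=
  Finset.Icc (cellCenter c g j - c) (cellCenter c g j + c)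

def IsMarkedCell {A : Type*} (x₀ : ℤ → A) (c g j : ℕ) (x : ℤ → A) : Prop :=
  ∀ i ∈ cellCore c g j, x i = shiftZ (cellCenter c g j) x₀ i

variable {c g : ℕ}

theorem card_cell (j : ℕ) : (cell c g j).card = 2 * c + 2 * g + 1 := by
  simp only [cell, Int.card_Ico]
  omega

theorem cellCore_subset_cell (j : ℕ) : cellCore c g j ⊆ cell c g j := by
  intro i hi
  simp only [cellCore, cellCenter, cell, Finset.mem_Icc, Finset.mem_Ico] at hi ⊢
  omega

theorem lt_natAbs_sub_of_notMem_cell {j : ℕ} {a b : ℤ} (ha : a ∉ cell c g j)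
    (hb : b ∈ cellCore c g j) : g < (a - b).natAbs := by
  simp only [cellCore, cellCenter, cell, Finset.mem_Icc, Finset.mem_Ico] at ha hb
  omega

theorem eq_of_mem_cell {j j' : ℕ} {i : ℤ} (h : i ∈ cell c g j) (h' : i ∈ cell c g j') :
    j = j' := by
  simp only [cell, Finset.mem_Ico] at h h'
  by_contra hne
  rcases Nat.lt_or_gt_of_ne hne with hlt | hlt
  · have : (j : ℤ) * (2 * c + 2 * g + 1) + (2 * c + 2 * g + 1) ≤ j' * (2 * c + 2 * g + 1) := by
      have : (j : ℤ) + 1 ≤ j' := by exact_mod_cast hlt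
      nlinarith
    omega
  · have : (j' : ℤ) * (2 * c + 2 * g + 1) + (2 * c + 2 * g + 1) ≤ j * (2 * c + 2 * g + 1) := by
      have : (j' : ℤ) + 1 ≤ j := by exact_mod_cast hlt
      nlinarith
    omega

theorem cell_subset_Ico {j k : ℕ} (hj : j < k) :
    cell c g j ⊆ Finset.Ico (0 : ℤ) (k * (2 * c + 2 * g + 1)) := by
  have : (j : ℤ) * (2 * c + 2 * g + 1) + (2 * c + 2 * g + 1) ≤ k * (2 * c + 2 * g + 1) := by
    have : (j : ℤ) + 1 ≤ k := by exact_mod_cast hj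
    nlinarith
  have : (0 : ℤ) ≤ j * (2 * c + 2 * g + 1) := by positivity
  intro i hi
  simp only [cell, Finset.mem_Ico] at hi ⊢
  omega

end Cells

section Marking

variable {A : Type*} {X Y : Set (ℤ → A)} {g c : ℕ}

theorem GluingGap.exists_marked_iff_mem (hX : GluingGap X g)
    (hshift : ∀ n : ℤ, ∀ x ∈ X, shiftZ n x ∈ X) (hYX : Y ⊆ X) {x₀ : ℤ → A} (hx₀ : x₀ ∈ X)
    (hY : ∀ y ∈ Y, ∀ n : ℤ, ∃ i ∈ Finset.Icc (n - c) (n + c), y i ≠ shiftZ n x₀ i)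
    {k : ℕ} {S : Finset ℕ} {y : ℤ → A} (hy : y ∈ Y) :
    ∃ x ∈ X, (∀ j ∈ Finset.range k, IsMarkedCell x₀ c g j x ↔ j ∈ S) ∧
      ∀ i ∈ Finset.Ico (0 : ℤ) (k * (2 * c + 2 * g + 1)),
        (∀ j ∈ S, i ∉ cell c g j) → x i = y i := by
  set Ω := (Finset.Ico (0 : ℤ) (k * (2 * c + 2 * g + 1))).filter fun i => ∀ j ∈ S, i ∉ cell c g j
  obtain ⟨x, hx, hxcore, hxΩ⟩ := hX.exists_forall_eq S (cellCore c g)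
    (fun j => shiftZ (cellCenter c g j) x₀) (fun _ _ => hshift _ _ hx₀)
    (fun j _ j' _ hne _ ha _ hb => lt_natAbs_sub_of_notMem_cell
      (fun ha' => hne (eq_of_mem_cell ((cellCore_subset_cell j) ha) ha')) hb)
    Ω (fun j hj _ ha _ hb => lt_natAbs_sub_of_notMem_cell ((Finset.mem_filter.1 ha).2 j hj) hb)
    (hYX hy)
  refine ⟨x, hx, fun j hj => ⟨fun hmarked => ?_, hxcore j⟩,
    fun i hi hiS => hxΩ i (Finset.mem_filter.2 ⟨hi, hiS⟩)⟩
  -- an unmarked cell of `x` carries `y`, which avoids the marker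
  by_contra hjS
  obtain ⟨i, hi, hne⟩ := hY y hy (cellCenter c g j)
  have hcell := cellCore_subset_cell j hi
  refine hne ((hxΩ i (Finset.mem_filter.2 ⟨cell_subset_Ico (Finset.mem_range.1 hj) hcell,
    fun j' hj' hi' => hjS ?_⟩)).symm.trans (hmarked i hi))
  rwa [eq_of_mem_cell hcell hi']

theorem GluingGap.ncard_patterns_mul_pow_le [Finite A] (hX : GluingGap X g)
    (hshift : ∀ n : ℤ, ∀ x ∈ X, shiftZ n x ∈ X) (hYX : Y ⊆ X) {x₀ : ℤ → A} (hx₀ : x₀ ∈ X)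
    (hY : ∀ y ∈ Y, ∀ n : ℤ, ∃ i ∈ Finset.Icc (n - c) (n + c), y i ≠ shiftZ n x₀ i) (k : ℕ) :
    (patterns Y (Finset.Ico (0 : ℤ) (k * (2 * c + 2 * g + 1)))).ncard *
        (Nat.card A ^ (2 * c + 2 * g + 1) + 1) ^ k ≤
      (patterns X (Finset.Ico (0 : ℤ) (k * (2 * c + 2 * g + 1)))).ncard *
        (Nat.card A ^ (2 * c + 2 * g + 1)) ^ k := by
  have : Nonempty A := ⟨x₀ 0⟩
  simpa using ncard_patterns_mul_pow_le_of_marking X Y _ (Finset.range k) (cell c g) _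
    (fun j _ => (card_cell j).le)
    (IsMarkedCell x₀ c g)
    (fun x x' hxx' j hj => forall₂_congr fun i hi => by
      rw [hxx' i (cell_subset_Ico (Finset.mem_range.1 hj) (cellCore_subset_cell j hi))])
    (fun _ _ _ hy => hX.exists_marked_iff_mem hshift hYX hx₀ hY hy)

end Marking

/-- If `A` is a finite set and `X ⊆ A^ℤ` is a strongly irreducible subshift, then `X`
is surjunctive: every injective continuous shift-equivariant map `τ : X → X` is
surjective. -/
theorem strongly_irreducible_surjunctive_Z
    {A : Type*} [Finite A] [TopologicalSpace A] [DiscreteTopology A]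
    (X : Set (ℤ → A)) (hX : IsSubshiftZ X) (hsi : IsStronglyIrreducibleZ X)
    (τ : (ℤ → A) → (ℤ → A)) (hmaps : Set.MapsTo τ X X) (hcont : ContinuousOn τ X)
    (hequiv : ∀ n : ℤ, ∀ x ∈ X, τ (shiftZ n x) = shiftZ n (τ x))
    (hinj : Set.InjOn τ X) :
    X ⊆ τ '' X := by
  intro x₀ hx₀
  by_contra hx₀Y
  have : Nonempty A := ⟨x₀ 0⟩
  obtain ⟨c, hc⟩ := (hX.image hcont hequiv).exists_forall_exists_ne_shiftZ hx₀Y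
  obtain ⟨g, hg⟩ := hsi.exists_gluingGap
  obtain ⟨s, hs⟩ := hX.exists_forall_eq_of_injOn hcont hequiv hinj
  set D := Nat.card A ^ (2 * c + 2 * g + 1)
  obtain ⟨k, hk⟩ := exists_mul_pow_lt_add_one_pow (Nat.card A ^ (2 * s)) D
  set I := Finset.Ico (0 : ℤ) (k * (2 * c + 2 * g + 1))
  have hpos : 0 < (patterns (τ '' X) I).ncard :=
    (Set.ncard_pos (Set.toFinite _)).2 ⟨_, τ x₀, ⟨x₀, hx₀, rfl⟩, rfl⟩
  have hcount := calc
    (patterns (τ '' X) I).ncard * (D + 1) ^ k ≤ (patterns X I).ncard * D ^ k :=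
        hg.ncard_patterns_mul_pow_le hX.2 (Set.image_subset_iff.2 hmaps) hx₀ hc k
    _ ≤ (patterns (τ '' X) I).ncard * Nat.card A ^ (2 * s) * D ^ k := by
        gcongr
        exact ncard_patterns_Ico_le_mul_of_radius hs 0 _
    _ = (patterns (τ '' X) I).ncard * (Nat.card A ^ (2 * s) * D ^ k) := mul_assoc ..
  exact (Nat.le_of_mul_le_mul_left hcount hpos).not_gt hk
end

section
/- Let A be a finite set and let X ⊆ A^ℤ be a strongly irreducible subshift. Then the automorphism group Aut(X), consisting of all bijective continuous shift-equivariant maps X → X under composition, is a residually finite group. -/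
/-- An automorphism of a subshift `X ⊆ A^ℤ`: a bijective self-map of `X` that is
continuous (in the prodiscrete topology) with continuous inverse and commutes
(together with its inverse) with the shift action of `ℤ`.
(For a subshift, a bijective continuous shift-equivariant map automatically has
continuous equivariant inverse, by compactness and shift-invariance.) -/
structure ShiftAutZ {A : Type*} [TopologicalSpace A] (X : Set (ℤ → A)) where
  toEquiv : {x : ℤ → A // x ∈ X} ≃ {x : ℤ → A // x ∈ X}
  continuous_toFun : Continuous fun x : {x : ℤ → A // x ∈ X} => (toEquiv x : ℤ → A)
  continuous_invFun : Continuous fun x : {x : ℤ → A // x ∈ X} => (toEquiv.symm x : ℤ → A)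
  equivariant : ∀ (n : ℤ) (x y : {x : ℤ → A // x ∈ X}),
    (y : ℤ → A) = shiftZ n (x : ℤ → A) → (toEquiv y : ℤ → A) = shiftZ n (toEquiv x : ℤ → A)
  equivariant_symm : ∀ (n : ℤ) (x y : {x : ℤ → A // x ∈ X}),
    (y : ℤ → A) = shiftZ n (x : ℤ → A) →
      (toEquiv.symm y : ℤ → A) = shiftZ n (toEquiv.symm x : ℤ → A)

theorem ShiftAutZ.ext' {A : Type*} [TopologicalSpace A] {X : Set (ℤ → A)}
    {f g : ShiftAutZ X} (h : f.toEquiv = g.toEquiv) : f = g := by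
  cases f; cases g; cases h; rfl

/-- The automorphism group `Aut(X)` of a subshift over `ℤ`, under composition. -/
instance ShiftAutZ.instGroup {A : Type*} [TopologicalSpace A]
    (X : Set (ℤ → A)) : Group (ShiftAutZ X) where
  mul f₁ f₂ :=
    { toEquiv := f₂.toEquiv.trans f₁.toEquiv
      continuous_toFun := by
        have h2 : Continuous fun x : {x : ℤ → A // x ∈ X} => f₂.toEquiv x :=
          f₂.continuous_toFun.subtype_mk fun x => (f₂.toEquiv x).2
        exact f₁.continuous_toFun.comp h2
      continuous_invFun := by
        have h1 : Continuous fun x : {x : ℤ → A // x ∈ X} => f₁.toEquiv.symm x :=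
          f₁.continuous_invFun.subtype_mk fun x => (f₁.toEquiv.symm x).2
        exact f₂.continuous_invFun.comp h1
      equivariant := fun n x y h => f₁.equivariant n _ _ (f₂.equivariant n x y h)
      equivariant_symm := fun n x y h =>
        f₂.equivariant_symm n _ _ (f₁.equivariant_symm n x y h) }
  one :=
    { toEquiv := Equiv.refl _
      continuous_toFun := continuous_subtype_val
      continuous_invFun := continuous_subtype_val
      equivariant := fun _ _ _ h => h
      equivariant_symm := fun _ _ _ h => h }
  inv f :=
    { toEquiv := f.toEquiv.symm
      continuous_toFun := f.continuous_invFun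
      continuous_invFun := f.continuous_toFun
      equivariant := f.equivariant_symm
      equivariant_symm := f.equivariant }
  mul_assoc a b c := ShiftAutZ.ext' (Equiv.ext fun _ => rfl)
  one_mul a := ShiftAutZ.ext' (Equiv.ext fun _ => rfl)
  mul_one a := ShiftAutZ.ext' (Equiv.ext fun _ => rfl)
  inv_mul_cancel a := ShiftAutZ.ext' (Equiv.ext fun x => a.toEquiv.symm_apply_apply x)

/-!
The points of `X` of a given period form a finite set, permuted by `Aut(X)`; a nontrivial
automorphism moves a point, hence, the moved points forming an open set, a periodic point as soon as
periodic points are dense, and then it acts nontrivially on a finite set.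

Density: recode the configurations of `X` that repeat a given pattern in every block of length `T`
as configurations over the alphabet of blocks. For large `T`, strong irreducibility makes any two
such configurations gluable along finite sets at distance two. A subshift with this property has a
periodic point, by induction on the number of letters: for a letter `b`, the configurations with `b`
at all even sites, read on the odd sites, again form such a subshift. Iterating, either `b` drops
out of the alphabet, or `b` occurs in arbitrarily long runs and the constant configuration `b`
belongs to the subshift.
-/

open Set Function

@[simp]
lemma shiftZ_apply {A : Type*} (n : ℤ) (x : ℤ → A) (m : ℤ) : shiftZ n x m = x (m - n) := rfl

lemma shiftZ_eq_self_iff {A : Type*} {P : ℤ} {x : ℤ → A} : shiftZ P x = x ↔ Periodic x P := by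
  constructor
  · intro h m
    simpa using (congrFun h (m + P)).symm
  · intro h
    funext m
    simpa using (h (m - P)).symm

section Compactness

variable {ι B : Type*} [TopologicalSpace B] [DiscreteTopology B]

lemma isClosed_setOf_forall_apply {κ : Type*} (p : κ → ι) (Q : κ → B → Prop) :
    IsClosed {z : ι → B | ∀ k, Q k (z (p k))} := by
  simp only [ofPred_forall]
  exact isClosed_iInter fun k => (isClosed_discrete {b | Q k b}).preimage (continuous_apply _)

lemma IsClosed.exists_forall_of_forall_finset [Finite B] {Z : Set (ι → B)} (hZ : IsClosed Z)
    (Q : ι → B → Prop) (h : ∀ F : Finset ι, ∃ z ∈ Z, ∀ i ∈ F, Q i (z i)) :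
    ∃ z ∈ Z, ∀ i, Q i (z i) := by
  obtain ⟨z, hz, hQ⟩ := hZ.isCompact.inter_iInter_nonempty (fun i => {z : ι → B | Q i (z i)})
    (fun i => (isClosed_discrete {b | Q i b}).preimage (continuous_apply i))
    fun F => by
      obtain ⟨z, hz, hQ⟩ := h F
      exact ⟨z, hz, mem_iInter₂.mpr hQ⟩
  exact ⟨z, hz, mem_iInter.mp hQ⟩

end Compactness

section Gluing

variable {B : Type*}

def GluesAt (Z : Set (ℤ → B)) (m : ℕ) : Prop :=
  ∀ Ω₁ Ω₂ : Finset ℤ, (∀ a ∈ Ω₁, ∀ c ∈ Ω₂, (m : ℤ) ≤ |a - c|) →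
    ∀ z₁ ∈ Z, ∀ z₂ ∈ Z, ∃ z ∈ Z, EqOn z z₁ Ω₁ ∧ EqOn z z₂ Ω₂

lemma IsStronglyIrreducibleZ.exists_gluesAt {Z : Set (ℤ → B)} (h : IsStronglyIrreducibleZ Z) :
    ∃ m, 0 < m ∧ GluesAt Z m := by
  obtain ⟨Δ, hΔ⟩ := h
  refine ⟨Δ.sup Int.natAbs + 1, Nat.succ_pos _, fun Ω₁ Ω₂ hsep z₁ hz₁ z₂ hz₂ => ?_⟩
  refine hΔ Ω₁ Ω₂ (fun a ha d hd had => ?_) z₁ hz₁ z₂ hz₂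
  have hd' : d.natAbs ≤ Δ.sup Int.natAbs := Finset.le_sup hd
  have := hsep a ha _ had
  rw [sub_sub_cancel, Int.abs_eq_natAbs] at this
  omega

variable {Z : Set (ℤ → B)} {m : ℕ}

theorem GluesAt.exists_eqOn_inter_finset (hg : GluesAt Z m) {ι : Type*} [Nonempty ι]
    (S : ι → Set ℤ) (x : ι → ℤ → B) (hx : ∀ i, x i ∈ Z)
    (hS : ∀ i j, i ≠ j → ∀ a ∈ S i, ∀ c ∈ S j, (m : ℤ) ≤ |a - c|) (F : Finset ℤ) (s : Finset ι) :
    ∃ z ∈ Z, ∀ i ∈ s, EqOn z (x i) (S i ∩ F) := by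
  classical
  induction s using Finset.induction_on with
  | empty => exact ⟨x (Classical.arbitrary ι), hx _, by simp⟩
  | insert i s hi ih =>
    obtain ⟨z, hz, hzs⟩ := ih
    obtain ⟨w, hw, hw₁, hw₂⟩ := hg (F.filter fun a => ∃ j ∈ s, a ∈ S j) (F.filter (· ∈ S i))
      (by
        simp only [Finset.mem_filter]
        rintro a ⟨-, j, hj, ha⟩ c ⟨-, hc⟩
        exact hS j i (by rintro rfl; exact hi hj) a ha c hc)
      z hz (x i) (hx i)
    refine ⟨w, hw, fun j hj a ⟨haj, ha⟩ => ?_⟩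
    rcases Finset.mem_insert.mp hj with rfl | hj
    · exact hw₂ (Finset.mem_filter.mpr ⟨ha, haj⟩)
    · rw [hw₁ (Finset.mem_filter.mpr ⟨ha, j, hj, haj⟩), hzs j hj ⟨haj, ha⟩]

variable [TopologicalSpace B] [DiscreteTopology B] [Finite B]

theorem GluesAt.exists_eqOn (hg : GluesAt Z m) (hZ : IsClosed Z) (hm : 0 < m)
    {ι : Type*} [Nonempty ι] (S : ι → Set ℤ) (x : ι → ℤ → B) (hx : ∀ i, x i ∈ Z)
    (hS : ∀ i j, i ≠ j → ∀ a ∈ S i, ∀ c ∈ S j, (m : ℤ) ≤ |a - c|) :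
    ∃ z ∈ Z, ∀ i, EqOn z (x i) (S i) := by
  classical
  have hdisj : ∀ {i j a}, a ∈ S i → a ∈ S j → i = j := fun hi hj => by
    by_contra hij
    have := hS _ _ hij _ hi _ hj
    simp only [sub_self, abs_zero] at this
    omega
  obtain ⟨z, hz, hQ⟩ := hZ.exists_forall_of_forall_finset
    (fun a c => ∀ i, a ∈ S i → c = x i a) fun F => by
      let idx : ℤ → ι := fun a => if h : ∃ i, a ∈ S i then h.choose else Classical.arbitrary ι
      obtain ⟨z, hz, hzs⟩ := hg.exists_eqOn_inter_finset S x hx hS F (F.image idx)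
      refine ⟨z, hz, fun a ha i hai => hzs i ?_ ⟨hai, ha⟩⟩
      have hex : ∃ i, a ∈ S i := ⟨i, hai⟩
      have hidx : idx a = i := by
        simp only [idx, dif_pos hex]
        exact hdisj hex.choose_spec hai
      exact hidx ▸ Finset.mem_image_of_mem idx ha
  exact ⟨z, hz, fun i a ha => hQ a i ha⟩

theorem GluesAt.exists_eqOn_pair (hg : GluesAt Z m) (hZ : IsClosed Z) (hm : 0 < m)
    {S₁ S₂ : Set ℤ} (hS : ∀ a ∈ S₁, ∀ c ∈ S₂, (m : ℤ) ≤ |a - c|)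
    {z₁ z₂ : ℤ → B} (hz₁ : z₁ ∈ Z) (hz₂ : z₂ ∈ Z) :
    ∃ z ∈ Z, EqOn z z₁ S₁ ∧ EqOn z z₂ S₂ := by
  obtain ⟨z, hz, h⟩ := hg.exists_eqOn hZ hm (fun b : Bool => if b then S₁ else S₂)
    (fun b => if b then z₁ else z₂) (by rintro (_ | _) <;> assumption) (by
      rintro (_ | _) (_ | _) hne a ha c hc <;> simp only [ne_eq, not_true_eq_false] at hne
      · exact abs_sub_comm a c ▸ hS c hc a ha
      · exact hS a ha c hc)
  exact ⟨z, hz, h true, h false⟩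

end Gluing

section HalvingRecoding

variable {B : Type*}

def letters (Z : Set (ℤ → B)) : Set B := {b | ∃ z ∈ Z, ∃ i, z i = b}

def evenConst (b : B) (Z : Set (ℤ → B)) : Set (ℤ → B) := {z ∈ Z | ∀ j, z (2 * j) = b}

def oddTrace (b : B) (Z : Set (ℤ → B)) : Set (ℤ → B) :=
  (fun z j => z (2 * j + 1)) '' evenConst b Z

def HasRun (b : B) (n : ℕ) (z : ℤ → B) : Prop := ∃ a : ℤ, ∀ i ∈ Ico a (a + n), z i = b

def IsShiftPeriodic (z : ℤ → B) : Prop := ∃ P : ℕ, 0 < P ∧ Periodic z P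

def HasPeriodicPoint (Z : Set (ℤ → B)) : Prop := ∃ z ∈ Z, IsShiftPeriodic z

variable {Z : Set (ℤ → B)} {b : B}

lemma HasRun.mono {n n' : ℕ} {z : ℤ → B} (h : HasRun b n z) (hn : n' ≤ n) : HasRun b n' z :=
  let ⟨a, ha⟩ := h
  ⟨a, fun i hi => ha i ⟨hi.1, hi.2.trans_le (by omega)⟩⟩

lemma letters_nonempty (h : Z.Nonempty) : (letters Z).Nonempty :=
  let ⟨z, hz⟩ := h; ⟨z 0, z, hz, 0, rfl⟩

lemma letters_oddTrace_subset : letters (oddTrace b Z) ⊆ letters Z := by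
  rintro c ⟨_, ⟨ζ, hζ, rfl⟩, i, rfl⟩
  exact ⟨ζ, hζ.1, 2 * i + 1, rfl⟩

lemma exists_periodic_of_mem_oddTrace {η : ℤ → B} (hη : η ∈ oddTrace b Z) {P : ℤ}
    (hP : Periodic η P) : ∃ ζ ∈ Z, Periodic ζ (2 * P) := by
  obtain ⟨ζ, ⟨hζ, heven⟩, rfl⟩ := hη
  refine ⟨ζ, hζ, fun i => ?_⟩
  obtain ⟨j, rfl | rfl⟩ := Int.even_or_odd' i
  · rw [← mul_add, heven, heven]
  · rw [show 2 * j + 1 + 2 * P = 2 * (j + P) + 1 by ring]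
    exact hP j

lemma exists_hasRun_of_mem_oddTrace {η : ℤ → B} (hη : η ∈ oddTrace b Z) {n : ℕ}
    (hrun : HasRun b n η) : ∃ ζ ∈ Z, HasRun b (2 * n + 1) ζ := by
  obtain ⟨ζ, ⟨hζ, heven⟩, rfl⟩ := hη
  obtain ⟨a, ha⟩ := hrun
  refine ⟨ζ, hζ, 2 * a, fun i hi => ?_⟩
  obtain ⟨j, rfl | rfl⟩ := Int.even_or_odd' i
  · exact heven j
  · simp only [mem_Ico] at hi
    exact ha j (by simp only [mem_Ico]; omega)

variable [TopologicalSpace B] [DiscreteTopology B] [Finite B]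

lemma const_mem_of_forall_hasRun (hZ : IsSubshiftZ Z) (h : ∀ n, ∃ z ∈ Z, HasRun b n z) :
    (fun _ => b) ∈ Z := by
  obtain ⟨z, hz, hb⟩ := hZ.1.exists_forall_of_forall_finset (fun _ c => c = b) fun F => by
    obtain ⟨z, hz, a, ha⟩ := h (2 * F.sup Int.natAbs + 1)
    refine ⟨shiftZ (-(a + F.sup Int.natAbs)) z, hZ.2 _ _ hz, fun i hi => ha _ ?_⟩
    have : i.natAbs ≤ F.sup Int.natAbs := Finset.le_sup hi
    simp only [mem_Ico]
    omega
  simpa [funext hb] using hz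

lemma evenConst_nonempty (hZ : IsSubshiftZ Z) (hg : GluesAt Z 2) (hb : b ∈ letters Z) :
    (evenConst b Z).Nonempty := by
  obtain ⟨z₀, hz₀, i₀, rfl⟩ := hb
  obtain ⟨z, hz, h⟩ := hg.exists_eqOn hZ.1 two_pos (fun j : ℤ => {2 * j})
    (fun j => shiftZ (2 * j - i₀) z₀) (fun j => hZ.2 _ _ hz₀) (fun i j hij a ha c hc => by
      rw [mem_singleton_iff] at ha hc
      rw [ha, hc, le_abs']
      omega)
  exact ⟨z, hz, fun j => by simpa using h j rfl⟩

lemma isSubshiftZ_oddTrace (hZ : IsSubshiftZ Z) (b : B) : IsSubshiftZ (oddTrace b Z) := by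
  refine ⟨?_, ?_⟩
  · have hclosed : IsClosed (evenConst b Z) :=
      hZ.1.inter (isClosed_setOf_forall_apply (fun j : ℤ => 2 * j) fun _ c => c = b)
    exact (hclosed.isCompact.image (continuous_pi fun j => continuous_apply _)).isClosed
  · rintro n _ ⟨ζ, ⟨hζ, heven⟩, rfl⟩
    refine ⟨shiftZ (2 * n) ζ, ⟨hZ.2 _ _ hζ, fun j => ?_⟩, funext fun j => ?_⟩
    · simpa [← mul_sub] using heven (j - n)
    · simp only [shiftZ_apply]
      ring_nf

theorem gluesAt_two_oddTrace (hg : GluesAt Z 2) (hZ : IsClosed Z) (b : B) :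
    GluesAt (oddTrace b Z) 2 := by
  rintro Ω₁ Ω₂ hΩ _ ⟨ζ₁, ⟨hζ₁, heven₁⟩, rfl⟩ _ ⟨ζ₂, ⟨hζ₂, heven₂⟩, rfl⟩
  let S₂ : Set ℤ := {i | ∃ k ∈ Ω₂, |i - (2 * k + 1)| ≤ 1}
  let S₁ : Set ℤ := {i | Even i ∨ ∃ j ∈ Ω₁, i = 2 * j + 1} \ S₂
  have hsep : ∀ a ∈ S₁, ∀ c ∈ S₂, ((2 : ℕ) : ℤ) ≤ |a - c| := by
    rintro a ⟨ha, ha₂⟩ c ⟨k, hk, hc⟩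
    have hak : ¬ |a - (2 * k + 1)| ≤ 1 := fun h => ha₂ ⟨k, hk, h⟩
    rw [abs_le] at hc hak
    rw [le_abs']
    rcases ha with ⟨r, rfl⟩ | ⟨j, hj, rfl⟩
    · omega
    · have := hΩ j hj k hk
      rw [le_abs'] at this
      omega
  obtain ⟨z, hz, h₁, h₂⟩ := hg.exists_eqOn_pair hZ two_pos hsep hζ₁ hζ₂
  have heven : ∀ j, z (2 * j) = b := fun j => by
    by_cases h : 2 * j ∈ S₂
    · rw [h₂ h, heven₂]
    · rw [h₁ ⟨Or.inl (even_two_mul j), h⟩, heven₁]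
  refine ⟨_, ⟨z, ⟨hz, heven⟩, rfl⟩, fun j hj => h₁ ⟨Or.inr ⟨j, hj, rfl⟩, ?_⟩,
    fun k hk => h₂ ⟨k, hk, by simp⟩⟩
  rintro ⟨k, hk, hjk⟩
  have := hΩ j hj k hk
  rw [abs_le] at hjk
  rw [le_abs'] at this
  omega

end HalvingRecoding

section Iterates

variable {B : Type*} {Z : Set (ℤ → B)} {b : B}

lemma HasPeriodicPoint.of_oddTrace (h : HasPeriodicPoint (oddTrace b Z)) : HasPeriodicPoint Z := by
  obtain ⟨η, hη, P, hP, hper⟩ := h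
  obtain ⟨ζ, hζ, hζper⟩ := exists_periodic_of_mem_oddTrace hη hper
  exact ⟨ζ, hζ, 2 * P, by omega, by exact_mod_cast hζper⟩

lemma HasPeriodicPoint.of_iterate_oddTrace (k : ℕ) (h : HasPeriodicPoint ((oddTrace b)^[k] Z)) :
    HasPeriodicPoint Z := by
  induction k generalizing Z with
  | zero => exact h
  | succ k ih => exact (ih (by rwa [← iterate_succ_apply])).of_oddTrace

lemma letters_iterate_oddTrace_subset (k : ℕ) : letters ((oddTrace b)^[k] Z) ⊆ letters Z := by
  induction k generalizing Z with
  | zero => exact subset_rfl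
  | succ k ih => exact ih.trans letters_oddTrace_subset

lemma exists_hasRun_of_mem_letters_iterate (k : ℕ) (hb : b ∈ letters ((oddTrace b)^[k] Z)) :
    ∃ z ∈ Z, HasRun b (k + 1) z := by
  induction k generalizing Z with
  | zero =>
    obtain ⟨z, hz, i, rfl⟩ := hb
    exact ⟨z, hz, i, fun j hj => by simp only [mem_Ico] at hj; rw [show j = i by omega]⟩
  | succ k ih =>
    obtain ⟨η, hη, hrun⟩ := ih hb
    obtain ⟨ζ, hζ, hrun'⟩ := exists_hasRun_of_mem_oddTrace hη hrun
    exact ⟨ζ, hζ, hrun'.mono (by omega)⟩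

variable [TopologicalSpace B] [DiscreteTopology B] [Finite B]

lemma isSubshiftZ_iterate_oddTrace (hZ : IsSubshiftZ Z) (hg : GluesAt Z 2) (k : ℕ) :
    IsSubshiftZ ((oddTrace b)^[k] Z) ∧ GluesAt ((oddTrace b)^[k] Z) 2 := by
  induction k with
  | zero => exact ⟨hZ, hg⟩
  | succ k ih =>
    rw [iterate_succ_apply']
    exact ⟨isSubshiftZ_oddTrace ih.1 b, gluesAt_two_oddTrace ih.2 ih.1.1 b⟩

theorem hasPeriodicPoint_of_gluesAt_two (hZ : IsSubshiftZ Z) (hne : Z.Nonempty)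
    (hg : GluesAt Z 2) : HasPeriodicPoint Z := by
  classical
  induction hn : (letters Z).ncard using Nat.strong_induction_on generalizing Z with
  | _ n ih =>
  obtain ⟨b, hb⟩ := letters_nonempty hne
  by_cases hpersist : ∀ k, b ∈ letters ((oddTrace b)^[k] Z)
  · refine ⟨fun _ => b, const_mem_of_forall_hasRun hZ fun n => ?_, 1, one_pos, fun _ => rfl⟩
    obtain ⟨z, hz, hrun⟩ := exists_hasRun_of_mem_letters_iterate n (hpersist n)
    exact ⟨z, hz, hrun.mono n.le_succ⟩
  push Not at hpersist
  set k := Nat.find hpersist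
  have hsub := isSubshiftZ_iterate_oddTrace (b := b) hZ hg
  have hne_k : ((oddTrace b)^[k] Z).Nonempty := by
    rcases hk0 : k with _ | j
    · exact hne
    · rw [iterate_succ_apply']
      have hbj : b ∈ letters ((oddTrace b)^[j] Z) := not_not.mp (Nat.find_min hpersist (by omega))
      exact (evenConst_nonempty (hsub j).1 (hsub j).2 hbj).image _
  have hlt : (letters ((oddTrace b)^[k] Z)).ncard < n := hn ▸ Set.ncard_lt_ncard
    ((Set.ssubset_iff_of_subset (letters_iterate_oddTrace_subset k)).mpr
      ⟨b, hb, Nat.find_spec hpersist⟩) (Set.toFinite _)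
  exact (ih _ hlt (hsub k).1 hne_k (hsub k).2 rfl).of_iterate_oddTrace k

end Iterates

section Blocks

variable {A : Type*}

def blockCode (T : ℕ) (z : ℤ → A) : ℤ → Fin T → A := fun j r => z (j * T + (r : ℕ))

def blockRepeat (X : Set (ℤ → A)) (x₀ : ℤ → A) (m T : ℕ) : Set (ℤ → A) :=
  {z ∈ X | ∀ j r : ℤ, m ≤ r → r + m < T → z (j * T + r) = x₀ r}

lemma exists_eq_mul_add {T : ℕ} (hT : 0 < T) (i : ℤ) :
    ∃ (j : ℤ) (r : Fin T), i = j * T + (r : ℕ) := by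
  have h0 := Int.emod_nonneg i (by omega : (T : ℤ) ≠ 0)
  have hlt := Int.emod_lt_of_pos i (by omega : (0 : ℤ) < T)
  refine ⟨i / T, ⟨(i % T).toNat, by omega⟩, ?_⟩
  rw [Int.toNat_of_nonneg h0]
  linarith [Int.mul_ediv_add_emod i T, mul_comm (i / T) (T : ℤ)]

lemma blockCode_shiftZ (T : ℕ) (n : ℤ) (z : ℤ → A) :
    blockCode T (shiftZ (n * T) z) = shiftZ n (blockCode T z) := by
  funext j r
  simp only [blockCode, shiftZ_apply]
  ring_nf

lemma periodic_of_periodic_blockCode {T : ℕ} (hT : 0 < T) {z : ℤ → A} {P : ℤ}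
    (h : Periodic (blockCode T z) P) : Periodic z (P * T) := by
  intro i
  obtain ⟨j, r, rfl⟩ := exists_eq_mul_add hT i
  rw [show j * T + (r : ℕ) + P * T = (j + P) * T + (r : ℕ) by ring]
  exact congrFun (h j) r

variable {X : Set (ℤ → A)} {x₀ : ℤ → A} {m T : ℕ} [TopologicalSpace A]

lemma shiftZ_mem_blockRepeat (hX : IsSubshiftZ X) {z : ℤ → A} (hz : z ∈ blockRepeat X x₀ m T)
    (n : ℤ) : shiftZ (n * T) z ∈ blockRepeat X x₀ m T := by
  refine ⟨hX.2 _ _ hz.1, fun j r hmr hrm => ?_⟩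
  rw [shiftZ_apply, show j * T + r - n * T = (j - n) * T + r by ring]
  exact hz.2 _ r hmr hrm

variable [DiscreteTopology A]

lemma isClosed_blockRepeat (hX : IsClosed X) : IsClosed (blockRepeat X x₀ m T) := by
  have h := isClosed_setOf_forall_apply (B := A) (fun k : ℤ × ℤ => k.1 * T + k.2)
    fun k c => m ≤ k.2 → k.2 + m < T → c = x₀ k.2
  simp only [Prod.forall] at h
  exact hX.inter h

variable [Finite A]

lemma blockRepeat_nonempty (hX : IsSubshiftZ X) (hg : GluesAt X m) (hm : 0 < m)
    (hx₀ : x₀ ∈ X) : (blockRepeat X x₀ m T).Nonempty := by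
  have hT : (0 : ℤ) ≤ T := by positivity
  obtain ⟨z, hz, h⟩ := hg.exists_eqOn hX.1 hm
    (fun j : ℤ => {i | ∃ r : ℤ, m ≤ r ∧ r + m < T ∧ i = j * T + r})
    (fun j => shiftZ (j * T) x₀) (fun j => hX.2 _ _ hx₀) (by
      rintro j k hjk _ ⟨r, hmr, hrm, rfl⟩ _ ⟨s, hms, hsm, rfl⟩
      rw [le_abs']
      rcases hjk.lt_or_gt with h | h
      · left; linarith [mul_le_mul_of_nonneg_right (show j + 1 ≤ k by omega) hT]
      · right; linarith [mul_le_mul_of_nonneg_right (show k + 1 ≤ j by omega) hT])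
  exact ⟨z, hz, fun j r hmr hrm => by simpa using h j ⟨r, hmr, hrm, rfl⟩⟩

lemma isSubshiftZ_blockCode_image (hX : IsSubshiftZ X) :
    IsSubshiftZ (blockCode T '' blockRepeat X x₀ m T) := by
  refine ⟨((isClosed_blockRepeat hX.1).isCompact.image ?_).isClosed, ?_⟩
  · exact continuous_pi fun j => continuous_pi fun r => continuous_apply _
  · rintro n _ ⟨z, hz, rfl⟩
    exact ⟨_, shiftZ_mem_blockRepeat hX hz n, blockCode_shiftZ T n z⟩

/-- The margins of width `m` keep every window at distance more than `m` from the neighbouring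
blocks, so the windows of the blocks that are not copied can be taken from either configuration. -/
theorem gluesAt_two_blockCode_image (hX : IsClosed X) (hg : GluesAt X m) (hm : 0 < m)
    (hmT : m ≤ T) : GluesAt (blockCode T '' blockRepeat X x₀ m T) 2 := by
  have hT : (0 : ℤ) ≤ T := by positivity
  rintro Ω₁ Ω₂ hΩ _ ⟨ζ₁, ⟨hζ₁, hrep₁⟩, rfl⟩ _ ⟨ζ₂, ⟨hζ₂, hrep₂⟩, rfl⟩
  let S₁ : Set ℤ := {i | ∃ j r : ℤ, i = j * T + r ∧ 0 ≤ r ∧ r < T ∧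
    (j ∈ Ω₁ ∨ j ∉ Ω₂ ∧ m ≤ r ∧ r + m < T)}
  let S₂ : Set ℤ := {i | ∃ k r : ℤ, i = k * T + r ∧ 0 ≤ r ∧ r < T ∧ k ∈ Ω₂}
  have hsep : ∀ a ∈ S₁, ∀ c ∈ S₂, (m : ℤ) ≤ |a - c| := by
    rintro _ ⟨j, r, rfl, hr0, hrT, hj⟩ _ ⟨k, s, rfl, hs0, hsT, hk⟩
    rw [le_abs']
    rcases hj with hj | ⟨hj, hmr, hrm⟩
    · have hjk := hΩ j hj k hk
      rw [le_abs'] at hjk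
      rcases hjk with h | h
      · left; linarith [mul_le_mul_of_nonneg_right (show j + 2 ≤ k by omega) hT]
      · right; linarith [mul_le_mul_of_nonneg_right (show k + 2 ≤ j by omega) hT]
    · rcases (show j ≠ k by rintro rfl; exact hj hk).lt_or_gt with h | h
      · left; linarith [mul_le_mul_of_nonneg_right (show j + 1 ≤ k by omega) hT]
      · right; linarith [mul_le_mul_of_nonneg_right (show k + 1 ≤ j by omega) hT]
  obtain ⟨z, hz, h₁, h₂⟩ := hg.exists_eqOn_pair hX hm hsep hζ₁ hζ₂
  have hrep : ∀ j r : ℤ, m ≤ r → r + m < T → z (j * T + r) = x₀ r := by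
    intro j r hmr hrm
    by_cases hj : j ∈ Ω₂
    · rw [h₂ ⟨j, r, rfl, by omega, by omega, hj⟩, hrep₂ j r hmr hrm]
    · rw [h₁ ⟨j, r, rfl, by omega, by omega, Or.inr ⟨hj, hmr, hrm⟩⟩, hrep₁ j r hmr hrm]
  refine ⟨_, ⟨z, ⟨hz, hrep⟩, rfl⟩, fun j hj => funext fun r => ?_,
    fun k hk => funext fun r => ?_⟩
  · exact h₁ ⟨j, r, rfl, by omega, by omega, Or.inl hj⟩
  · exact h₂ ⟨k, r, rfl, by omega, by omega, hk⟩

theorem exists_periodic_eqOn_window (hX : IsSubshiftZ X) (hg : GluesAt X m) (hm : 0 < m)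
    (hmT : m ≤ T) (hx₀ : x₀ ∈ X) : ∃ p ∈ X, IsShiftPeriodic p ∧
      ∀ r : ℤ, m ≤ r → r + m < T → p r = x₀ r := by
  obtain ⟨_, ⟨ζ, hζ, rfl⟩, P, hP, hper⟩ := hasPeriodicPoint_of_gluesAt_two
    (isSubshiftZ_blockCode_image hX) ((blockRepeat_nonempty hX hg hm hx₀).image _)
    (gluesAt_two_blockCode_image hX.1 hg hm hmT)
  refine ⟨ζ, hζ.1, ⟨P * T, Nat.mul_pos hP (by omega), ?_⟩, fun r hmr hrm => ?_⟩
  · exact_mod_cast periodic_of_periodic_blockCode (by omega) hper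
  · simpa using hζ.2 0 r hmr hrm

end Blocks

section Density

variable {A : Type*} [TopologicalSpace A] [DiscreteTopology A] [Finite A] {X : Set (ℤ → A)}

theorem exists_periodic_eqOn_finset (hX : IsSubshiftZ X) (hsi : IsStronglyIrreducibleZ X)
    {x : ℤ → A} (hx : x ∈ X) (I : Finset ℤ) :
    ∃ p ∈ X, IsShiftPeriodic p ∧ EqOn p x I := by
  obtain ⟨m, hm, hg⟩ := hsi.exists_gluesAt
  set R := I.sup Int.natAbs
  obtain ⟨p, hp, ⟨P, hP, hper⟩, hpx⟩ := exists_periodic_eqOn_window (T := 2 * (R + m) + 1) hX hg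
    hm (by omega) (hX.2 (R + m) x hx)
  refine ⟨shiftZ (-(R + m : ℕ)) p, hX.2 _ _ hp, ⟨P, hP, hper.sub_const _⟩, fun i hi => ?_⟩
  have hiR : i.natAbs ≤ R := Finset.le_sup hi
  rw [shiftZ_apply, sub_neg_eq_add]
  simpa using hpx (i + (R + m : ℕ)) (by omega) (by omega)

theorem dense_setOf_periodic (hX : IsSubshiftZ X) (hsi : IsStronglyIrreducibleZ X) :
    Dense {x : X | IsShiftPeriodic (x : ℤ → A)} := by
  refine Subtype.dense_iff.mpr fun x hx => mem_closure_iff_nhds.mpr fun U hU => ?_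
  rw [nhds_pi, Filter.mem_pi'] at hU
  obtain ⟨I, t, ht, hIU⟩ := hU
  obtain ⟨p, hp, hper, hpx⟩ := exists_periodic_eqOn_finset hX hsi hx I
  exact ⟨p, hIU fun i hi => hpx hi ▸ mem_of_mem_nhds (ht i), ⟨p, hp⟩, hper, rfl⟩

end Density

lemma finite_periodicPoints {A : Type*} [Finite A] {X : Set (ℤ → A)} {P : ℕ} (hP : 0 < P) :
    Finite {x : X // shiftZ P (x : ℤ → A) = x} := by
  refine Finite.of_injective (fun x (r : Fin P) => (x.1 : ℤ → A) r)
    fun x y h => Subtype.ext (Subtype.ext (funext fun i => ?_))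
  obtain ⟨j, r, rfl⟩ := exists_eq_mul_add hP i
  have hx := (shiftZ_eq_self_iff.mp x.2).int_mul j r
  have hy := (shiftZ_eq_self_iff.mp y.2).int_mul j r
  simp only [Int.cast_id] at hx hy
  rw [add_comm, hx, hy]
  exact congrFun h r

namespace ShiftAutZ

variable {A : Type*} [TopologicalSpace A] {X : Set (ℤ → A)}

lemma shiftZ_toEquiv_eq_self_iff (f : ShiftAutZ X) (P : ℤ) (x : X) :
    shiftZ P (f.toEquiv x : ℤ → A) = f.toEquiv x ↔ shiftZ P (x : ℤ → A) = x := by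
  constructor
  · intro h
    simpa using (f.equivariant_symm P _ _ h.symm).symm
  · exact fun h => (f.equivariant P x x h.symm).symm

def toPermPeriodic (P : ℤ) : ShiftAutZ X →* Equiv.Perm {x : X // shiftZ P (x : ℤ → A) = x} where
  toFun f := Equiv.Perm.subtypePerm f.toEquiv (f.shiftZ_toEquiv_eq_self_iff P)
  map_one' := rfl
  map_mul' _ _ := rfl

lemma exists_periodic_moved [DiscreteTopology A]
    (hdense : Dense {x : X | IsShiftPeriodic (x : ℤ → A)})
    {f : ShiftAutZ X} (hf : f ≠ 1) :
    ∃ x : X, ∃ P : ℕ, 0 < P ∧ shiftZ P (x : ℤ → A) = x ∧ f.toEquiv x ≠ x := by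
  obtain ⟨x, hx⟩ : ∃ x, f.toEquiv x ≠ x := by
    by_contra! h
    exact hf (ext' (Equiv.ext h))
  obtain ⟨y, ⟨P, hP, hper⟩, hy⟩ := hdense.exists_mem_open
    (isOpen_ne_fun f.continuous_toFun continuous_subtype_val) ⟨x, fun h => hx (Subtype.ext h)⟩
  exact ⟨y, P, hP, shiftZ_eq_self_iff.mpr hper, fun h => hy (congrArg Subtype.val h)⟩

end ShiftAutZ

/-- If `A` is a finite set and `X ⊆ A^ℤ` is a strongly irreducible subshift, then the
automorphism group `Aut(X)` of `X` is residually finite. -/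
theorem aut_residually_finite_Z
    {A : Type*} [Finite A] [TopologicalSpace A] [DiscreteTopology A]
    (X : Set (ℤ → A)) (hX : IsSubshiftZ X) (hsi : IsStronglyIrreducibleZ X) :
    ResiduallyFinite (ShiftAutZ X) := by
  refine Group.residuallyFinite_iff_exists_finiteIndex.mp
    (Group.residuallyFinite_of_forall_exists_finite_monoidHom fun f hf => ?_)
  obtain ⟨x, P, hP, hx, hfx⟩ := f.exists_periodic_moved (dense_setOf_periodic hX hsi) hf
  have := finite_periodicPoints (X := X) hP
  refine ⟨_, _, inferInstance, ShiftAutZ.toPermPeriodic P, fun h => hfx ?_⟩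
  exact congrArg Subtype.val (DFunLike.congr_fun h ⟨x, hx⟩)
end

section
/- Let G be a group, A a finite set, and X ⊆ A^G a subshift in which the set of periodic configurations is dense. Then X is surjunctive: every injective cellular automaton τ : X → X is surjective. -/
lemma shift_one {G A : Type*} [Group G] (x : G → A) : shift (1:G) x = x := by
  funext h; simp [shift]

lemma shift_shift {G A : Type*} [Group G] (a b : G) (x : G → A) :
    shift a (shift b x) = shift (a * b) x := by
  funext h; simp [shift, mul_assoc]

/-- If `X ⊆ A^G` is a subshift in which periodic configurations are dense, then `X` is
surjunctive: every injective cellular automaton (continuous `G`-equivariant self-map)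
`τ : X → X` is surjective. -/
theorem surjunctive_of_dense_periodic
    {G A : Type*} [Group G] [Finite A] [TopologicalSpace A] [DiscreteTopology A]
    (X : Set (G → A)) (hX : IsSubshift X)
    (hdense : X ⊆ closure {x ∈ X | IsPeriodicConfig x})
    (τ : (G → A) → (G → A)) (hmaps : Set.MapsTo τ X X) (hcont : ContinuousOn τ X)
    (hequiv : ∀ g : G, ∀ x ∈ X, τ (shift g x) = shift g (τ x))
    (hinj : Set.InjOn τ X) :
    X ⊆ τ '' X := by
  -- the image is closed
  have hcompact : IsCompact X := hX.1.isCompact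
  have himg : IsClosed (τ '' X) := (hcompact.image_of_continuousOn hcont).isClosed
  -- every periodic config of X is in the image
  have hper : {x ∈ X | IsPeriodicConfig x} ⊆ τ '' X := by
    rintro x ⟨hxX, hxper⟩
    set S : Set (G → A) := Set.range fun g : G => shift g x with hS
    haveI : Finite ↥S := hxper.to_subtype
    set Y : Set (G → A) := {y ∈ X | ∀ g : G, shift g x = x → shift g y = y} with hY
    -- Y is finite
    have hYfin : Y.Finite := by
      set Φ : (G → A) → (↥S → A) := fun y s => y (s.2.choose)⁻¹ with hΦ
      have hinjΦ : Set.InjOn Φ Y := by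
        rintro y₁ ⟨-, h₁⟩ y₂ ⟨-, h₂⟩ he
        funext h
        have hsmem : shift h⁻¹ x ∈ S := ⟨h⁻¹, rfl⟩
        set s : ↥S := ⟨shift h⁻¹ x, hsmem⟩ with hs
        have hg : shift s.2.choose x = shift h⁻¹ x := s.2.choose_spec
        set g := s.2.choose with hgdef
        have hfix : shift (h * g) x = x := by
          have := congrArg (shift h) hg
          rwa [shift_shift, shift_shift, mul_inv_cancel, shift_one] at this
        have key : ∀ y : G → A, shift (h * g) y = y → y h = y g⁻¹ := by
          intro y hy
          have := congrFun hy h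
          simpa [shift, mul_inv_rev, mul_assoc] using this.symm
        have e1 := key y₁ (h₁ _ hfix)
        have e2 := key y₂ (h₂ _ hfix)
        have : Φ y₁ s = Φ y₂ s := congrFun he s
        rw [e1, e2]; exact this
      exact Set.Finite.of_finite_image (Set.toFinite _) hinjΦ
    have hxY : x ∈ Y := ⟨hxX, fun g hg => hg⟩
    have hmapsY : Set.MapsTo τ Y Y := by
      rintro y ⟨hyX, hy⟩
      refine ⟨hmaps hyX, fun g hg => ?_⟩
      have := hequiv g y hyX
      rw [hy g hg] at this
      exact this.symm
    have hbij := (hYfin.injOn_iff_bijOn_of_mapsTo hmapsY).mp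
      (hinj.mono fun y hy => hy.1)
    obtain ⟨y, hyY, hyx⟩ := hbij.surjOn hxY
    exact ⟨y, hyY.1, hyx⟩
  -- conclude by density
  intro x hx
  exact closure_minimal hper himg (hdense hx)
end

section
/- Let G be a group, A a finite set, and X ⊆ A^G a subshift in which the set of periodic configurations is dense. Then the automorphism group Aut(X), consisting of all bijective cellular automata X → X under composition, is residually finite. -/
/-- An automorphism of a subshift `X ⊆ A^G`: a bijective self-map of `X` that is
continuous (in the prodiscrete topology) with continuous inverse and is
`G`-equivariant (together with its inverse) with respect to the shift action.
(For a subshift, a bijective continuous equivariant map automatically has continuous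
equivariant inverse, by compactness and shift-invariance.) -/
structure ShiftAut {G A : Type*} [Group G] [TopologicalSpace A] (X : Set (G → A)) where
  toEquiv : {x : G → A // x ∈ X} ≃ {x : G → A // x ∈ X}
  continuous_toFun : Continuous fun x : {x : G → A // x ∈ X} => (toEquiv x : G → A)
  continuous_invFun : Continuous fun x : {x : G → A // x ∈ X} => (toEquiv.symm x : G → A)
  equivariant : ∀ (g : G) (x y : {x : G → A // x ∈ X}),
    (y : G → A) = shift g (x : G → A) → (toEquiv y : G → A) = shift g (toEquiv x : G → A)
  equivariant_symm : ∀ (g : G) (x y : {x : G → A // x ∈ X}),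
    (y : G → A) = shift g (x : G → A) →
      (toEquiv.symm y : G → A) = shift g (toEquiv.symm x : G → A)

theorem ShiftAut.ext' {G A : Type*} [Group G] [TopologicalSpace A] {X : Set (G → A)}
    {f g : ShiftAut X} (h : f.toEquiv = g.toEquiv) : f = g := by
  cases f; cases g; cases h; rfl

/-- The automorphism group `Aut(X)` of a subshift, under composition. -/
instance ShiftAut.instGroup {G A : Type*} [Group G] [TopologicalSpace A]
    (X : Set (G → A)) : Group (ShiftAut X) where
  mul f₁ f₂ :=
    { toEquiv := f₂.toEquiv.trans f₁.toEquiv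
      continuous_toFun := by
        have h2 : Continuous fun x : {x : G → A // x ∈ X} => f₂.toEquiv x :=
          f₂.continuous_toFun.subtype_mk fun x => (f₂.toEquiv x).2
        exact f₁.continuous_toFun.comp h2
      continuous_invFun := by
        have h1 : Continuous fun x : {x : G → A // x ∈ X} => f₁.toEquiv.symm x :=
          f₁.continuous_invFun.subtype_mk fun x => (f₁.toEquiv.symm x).2
        exact f₂.continuous_invFun.comp h1
      equivariant := fun g x y h => f₁.equivariant g _ _ (f₂.equivariant g x y h)
      equivariant_symm := fun g x y h =>
        f₂.equivariant_symm g _ _ (f₁.equivariant_symm g x y h) }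
  one :=
    { toEquiv := Equiv.refl _
      continuous_toFun := continuous_subtype_val
      continuous_invFun := continuous_subtype_val
      equivariant := fun _ _ _ h => h
      equivariant_symm := fun _ _ _ h => h }
  inv f :=
    { toEquiv := f.toEquiv.symm
      continuous_toFun := f.continuous_invFun
      continuous_invFun := f.continuous_toFun
      equivariant := f.equivariant_symm
      equivariant_symm := f.equivariant }
  mul_assoc a b c := ShiftAut.ext' (Equiv.ext fun _ => rfl)
  one_mul a := ShiftAut.ext' (Equiv.ext fun _ => rfl)
  mul_one a := ShiftAut.ext' (Equiv.ext fun _ => rfl)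
  inv_mul_cancel a := ShiftAut.ext' (Equiv.ext fun x => a.toEquiv.symm_apply_apply x)

/-!
A nontrivial automorphism `φ` moves some point; the moved points form an open set and periodic
points are dense, so `φ` moves a periodic configuration `p`. The stabilizer `H` of `p` has finite
index, hence only finitely many configurations are `H`-invariant (they are functions on the
cosets of `H`). Automorphisms commute with the shift, so `Aut(X)` permutes the `H`-invariant
points of `X`, and `φ` acts nontrivially because it moves `p`. The kernel of this permutation
representation is a finite-index subgroup not containing `φ`.
-/

open MulAction

-- Under this instance `g • x` unfolds to `shift g x`, so orbits and stabilizers are those of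
-- the shift.
attribute [local instance] arrowAction

section Shift

variable {G A : Type*} [Group G]

theorem IsPeriodicConfig.finiteIndex_stabilizer {x : G → A} (hx : IsPeriodicConfig x) :
    (stabilizer G x).FiniteIndex :=
  have : Finite (orbit G x) := hx.to_subtype
  have := Finite.of_equiv _ (orbitEquivQuotientStabilizer G x)
  Subgroup.finiteIndex_of_finite_quotient

/-- An `H`-invariant configuration is constant on the right cosets `H g`, so it is a function
of `g⁻¹ H ∈ G ⧸ H`. -/
theorem finite_fixedPoints [Finite A] (H : Subgroup G) [H.FiniteIndex] :
    (fixedPoints H (G → A)).Finite := by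
  refine (Set.finite_range fun (f : G ⧸ H → A) (g : G) => f (g⁻¹ : G)).subset ?_
  intro x hx
  refine ⟨fun c => x c.out⁻¹, funext fun g => ?_⟩
  obtain ⟨h, hh⟩ := QuotientGroup.mk_out_eq_mul H g⁻¹
  have : x ((h : G)⁻¹ * g) = x g := congrFun (hx h) g
  simpa [hh] using this

end Shift

namespace ShiftAut

variable {G A : Type*} [Group G] [TopologicalSpace A] {X : Set (G → A)}

@[simp]
theorem inv_toEquiv (φ : ShiftAut X) : φ⁻¹.toEquiv = φ.toEquiv.symm := rfl

theorem apply_mem_fixedPoints (φ : ShiftAut X) {H : Subgroup G} {x : X}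
    (hx : (x : G → A) ∈ fixedPoints H (G → A)) :
    (φ.toEquiv x : G → A) ∈ fixedPoints H (G → A) :=
  fun h => (φ.equivariant h x x (hx h).symm).symm

theorem apply_mem_fixedPoints_iff (φ : ShiftAut X) {H : Subgroup G} {x : X} :
    (φ.toEquiv x : G → A) ∈ fixedPoints H (G → A) ↔ (x : G → A) ∈ fixedPoints H (G → A) := by
  refine ⟨fun hx => ?_, φ.apply_mem_fixedPoints⟩
  simpa using φ⁻¹.apply_mem_fixedPoints hx

variable (X) in
def permFixedPoints (H : Subgroup G) :
    ShiftAut X →* Equiv.Perm {x : X // (x : G → A) ∈ fixedPoints H (G → A)} where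
  toFun φ := φ.toEquiv.subtypeEquiv fun _ => φ.apply_mem_fixedPoints_iff.symm
  map_one' := rfl
  map_mul' _ _ := rfl

theorem exists_isPeriodicConfig_apply_ne [T2Space A]
    (hdense : X ⊆ closure {x ∈ X | IsPeriodicConfig x}) {φ : ShiftAut X} (hφ : φ ≠ 1) :
    ∃ p : X, IsPeriodicConfig (p : G → A) ∧ (φ.toEquiv p : G → A) ≠ p := by
  have hmoved : ∃ x : X, (φ.toEquiv x : G → A) ≠ x := by
    by_contra! h
    exact hφ (ShiftAut.ext' (Equiv.ext fun x => Subtype.ext (h x)))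
  have hopen : IsOpen {x : X | (φ.toEquiv x : G → A) ≠ x} :=
    isOpen_ne_fun φ.continuous_toFun continuous_subtype_val
  have hperiodic : Dense {x : X | IsPeriodicConfig (x : G → A)} :=
    Subtype.dense_iff.2 (by simpa [Set.image, and_comm] using hdense)
  exact hperiodic.exists_mem_open hopen hmoved

end ShiftAut

theorem aut_residually_finite_of_dense_periodic_general
    {G A : Type*} [Group G] [Finite A] [TopologicalSpace A] [DiscreteTopology A]
    (X : Set (G → A))
    (hdense : X ⊆ closure {x ∈ X | IsPeriodicConfig x}) :
    ResiduallyFinite (ShiftAut X) := by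
  intro φ hφ
  obtain ⟨p, hp, hφp⟩ := ShiftAut.exists_isPeriodicConfig_apply_ne hdense hφ
  have := hp.finiteIndex_stabilizer
  have : Finite {x : X // (x : G → A) ∈ fixedPoints (stabilizer G (p : G → A)) (G → A)} :=
    ((finite_fixedPoints _).preimage Subtype.val_injective.injOn).to_subtype
  set ρ := ShiftAut.permFixedPoints X (stabilizer G (p : G → A))
  have hp_fixed : (p : G → A) ∈ fixedPoints (stabilizer G (p : G → A)) (G → A) :=
    fun g => g.2
  refine ⟨ρ.ker, Subgroup.finiteIndex_ker ρ, fun hker => hφp ?_⟩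
  exact congrArg (fun y => (y.1 : G → A)) (Equiv.ext_iff.1 hker ⟨p, hp_fixed⟩)

/-- If `X ⊆ A^G` is a subshift in which periodic configurations are dense, then the
automorphism group `Aut(X)` of `X` is residually finite. -/
theorem aut_residually_finite_of_dense_periodic
    {G A : Type*} [Group G] [Finite A] [TopologicalSpace A] [DiscreteTopology A]
    (X : Set (G → A)) (hX : IsSubshift X)
    (hdense : X ⊆ closure {x ∈ X | IsPeriodicConfig x}) :
    ResiduallyFinite (ShiftAut X) :=
  aut_residually_finite_of_dense_periodic_general X hdense
end

section
/- Let G be a group and A a finite set. Every subshift X ⊆ A^G with bounded propagation is of finite type; more precisely, if X has Δ-propagation for a finite subset Δ ⊆ G, then X = {x ∈ A^G : (g⁻¹·x)|_Δ ∈ X|_Δ for all g ∈ G}, where X|_Δ = {x|_Δ : x ∈ X}. -/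
/-- A set of configurations `X ⊆ A^G` has `Δ`-propagation if any pattern `p` supported
on a finite set `Ω` whose restriction to each `Ω ∩ gΔ` coincides with (the restriction
of) some configuration of `X` is itself the restriction of a configuration of `X`. -/
def HasPropagation {G A : Type*} [Group G] (Δ : Finset G) (X : Set (G → A)) : Prop :=
  ∀ (Ω : Finset G) (p : G → A),
    (∀ g : G, ∃ x ∈ X, ∀ w ∈ Ω, (∃ d ∈ Δ, w = g * d) → p w = x w) →
    ∃ x ∈ X, ∀ w ∈ Ω, p w = x w

private lemma mem_of_finite_approx {G A : Type*} [TopologicalSpace A] [DiscreteTopology A]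
    (X : Set (G → A)) (hX : IsClosed X) (x : G → A)
    (h : ∀ Ω : Finset G, ∃ y ∈ X, ∀ w ∈ Ω, x w = y w) : x ∈ X := by
  rw [← hX.closure_eq]
  rw [mem_closure_iff]
  intro U hU hxU
  rcases isOpen_pi_iff.mp hU x hxU with ⟨I, u, hu, hsub⟩
  obtain ⟨y, hyX, hy⟩ := h I
  refine ⟨y, hsub fun i hi => ?_, hyX⟩
  rw [← hy i hi]
  exact (hu i hi).2

/-- A subshift with bounded propagation is of finite type; more precisely, if `X` has
`Δ`-propagation then `X = {x ∈ A^G : (g⁻¹·x)|_Δ ∈ X|_Δ for all g ∈ G}`. -/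
theorem sft_of_bounded_propagation
    {G A : Type*} [Group G] [Finite A] [TopologicalSpace A] [DiscreteTopology A]
    (X : Set (G → A)) (hX : IsSubshift X)
    (Δ : Finset G) (hprop : HasPropagation Δ X) :
    IsOfFiniteType X ∧
      X = {x : G → A | ∀ g : G, ∃ y ∈ X, ∀ d ∈ Δ, shift g⁻¹ x d = y d} := by
  have key : X = {x : G → A | ∀ g : G, ∃ y ∈ X, ∀ d ∈ Δ, shift g⁻¹ x d = y d} := by
    ext x
    constructor
    · intro hx g
      exact ⟨shift g⁻¹ x, hX.2 g⁻¹ x hx, fun d _ => rfl⟩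
    · intro hx
      apply mem_of_finite_approx X hX.1 x
      intro Ω
      apply hprop Ω x
      intro g
      obtain ⟨y, hyX, hy⟩ := hx g
      refine ⟨shift g y, hX.2 g y hyX, ?_⟩
      rintro w _ ⟨d, hd, rfl⟩
      have := hy d hd
      simp only [shift, inv_inv] at this ⊢
      rw [this, inv_mul_cancel_left]
  refine ⟨?_, key⟩
  refine ⟨Δ, {q | ∃ y ∈ X, ∀ w : {g : G // g ∈ Δ}, q w = y w.1}, ?_⟩
  ext x
  rw [Set.ext_iff.mp key x]
  simp only [Set.mem_setOf_eq]
  constructor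
  · intro h g
    obtain ⟨y, hyX, hy⟩ := h g⁻¹
    exact ⟨y, hyX, fun w => by simpa [shift, inv_inv] using hy w.1 w.2⟩
  · intro h g
    obtain ⟨y, hyX, hy⟩ := h g⁻¹
    exact ⟨y, hyX, fun d hd => by simpa [shift, inv_inv] using hy ⟨d, hd⟩⟩
end

section
/- Let G be a group, let m ≥ 1, let A = {0, 1, …, m}, and let E₁, …, E_k be finite subsets of G. Let X ⊆ A^G be the generalized golden mean subshift consisting of all x : G → A such that for every g ∈ G and every 1 ≤ i ≤ k there exists h ∈ gE_i with x(h) = 0. Then X is a subshift (closed and shift-invariant), X contains the identically-0 configuration, and X has Δ-propagation for Δ = E₁ ∪ ⋯ ∪ E_k. -/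
/-- The generalized golden mean subshift over the alphabet `A = {0, 1, …, m}`
determined by finite (nonempty) subsets `E₁, …, E_k ⊆ G`: it consists of all
`x : G → A` such that for every `g ∈ G` and every `i` there is `h ∈ gEᵢ` with
`x(h) = 0`. It is a subshift, it contains the identically-`0` configuration, and it
has `Δ`-propagation for `Δ = E₁ ∪ ⋯ ∪ E_k`. -/
theorem generalized_golden_mean_bounded_propagation
    {G : Type*} [Group G] [DecidableEq G] (m : ℕ) (hm : 1 ≤ m)
    (k : ℕ) (E : Fin k → Finset G) (hE : ∀ i, (E i).Nonempty) :
    IsSubshift {x : G → Fin (m + 1) |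
        ∀ (g : G) (i : Fin k), ∃ e ∈ E i, x (g * e) = 0} ∧
    (fun _ : G => (0 : Fin (m + 1))) ∈ {x : G → Fin (m + 1) |
        ∀ (g : G) (i : Fin k), ∃ e ∈ E i, x (g * e) = 0} ∧
    HasPropagation (Finset.univ.biUnion E) {x : G → Fin (m + 1) |
        ∀ (g : G) (i : Fin k), ∃ e ∈ E i, x (g * e) = 0} := by
  classical
  refine ⟨⟨?_, ?_⟩, ?_, ?_⟩
  · have hX : {x : G → Fin (m + 1) | ∀ (g : G) (i : Fin k), ∃ e ∈ E i, x (g * e) = 0}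
        = ⋂ (g : G) (i : Fin k), ⋃ e ∈ E i, {x : G → Fin (m + 1) | x (g * e) = 0} := by
      ext x; simp [Set.mem_iInter]
    rw [hX]
    refine isClosed_iInter fun g => isClosed_iInter fun i => ?_
    refine Set.Finite.isClosed_biUnion (E i).finite_toSet fun e _ => ?_
    exact isClosed_eq (continuous_apply (g * e)) continuous_const
  · intro g x hx g' i
    obtain ⟨e, he, h0⟩ := hx (g⁻¹ * g') i
    exact ⟨e, he, by simpa [shift, mul_assoc] using h0⟩
  · intro g i
    obtain ⟨e, he⟩ := hE i
    exact ⟨e, he, rfl⟩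
  · intro Ω p hp
    refine ⟨fun w => if w ∈ Ω then p w else 0, ?_, fun w hw => by simp [hw]⟩
    intro g i
    by_cases hsub : ∀ e ∈ E i, g * e ∈ Ω
    · obtain ⟨x, hxX, hagree⟩ := hp g
      obtain ⟨e, he, h0⟩ := hxX g i
      refine ⟨e, he, ?_⟩
      have hmem := hsub e he
      have hpe : p (g * e) = x (g * e) :=
        hagree _ hmem ⟨e, Finset.mem_biUnion.2 ⟨i, Finset.mem_univ i, he⟩, rfl⟩
      simp [hmem, hpe, h0]
    · push_neg at hsub
      obtain ⟨e, he, hnot⟩ := hsub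
      exact ⟨e, he, by simp [hnot]⟩
end

section
/- Let A be a finite set, X ⊆ A^ℤ a subshift, and n₀ ≥ 0 an integer. Then the following two conditions are equivalent: (a) for all words u, v ∈ L(X) there exists a word c ∈ L(X) with |c| ≤ n₀ such that ucv ∈ L(X); (b) X is irreducible and for every word u ∈ L(X) there exists a word c ∈ L(X) with |c| ≤ n₀ such that ucu ∈ L(X). -/

lemma appears_mid {A : Type*} {p w s : List A} {x : ℤ → A}
    (h : AppearsIn (p ++ (w ++ s)) x) : AppearsIn w x := by
  obtain ⟨i, hi⟩ := h
  refine ⟨i + p.length, ?_⟩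
  intro k
  have hk : p.length + k.1 < (p ++ (w ++ s)).length := by
    simp [List.length_append]; omega
  have h2 := hi ⟨p.length + k.1, hk⟩
  simp only [List.get_eq_getElem] at h2 ⊢
  rw [List.getElem_append_right (Nat.le_add_right _ _)] at h2
  simp only [Nat.add_sub_cancel_left] at h2
  rw [List.getElem_append_left k.2] at h2
  convert h2 using 2
  push_cast
  ring

/-- For a subshift `X ⊆ A^ℤ` and an integer `n₀ ≥ 0`, the following are equivalent:
(a) for all `u, v ∈ L(X)` there is `c ∈ L(X)` with `|c| ≤ n₀` and `ucv ∈ L(X)`;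
(b) `X` is irreducible (for all `u, v ∈ L(X)` there is a word `w` with `uwv ∈ L(X)`)
and for every `u ∈ L(X)` there is `c ∈ L(X)` with `|c| ≤ n₀` and `ucu ∈ L(X)`. -/
theorem W_conditions_equivalent
    {A : Type*} [Finite A] [TopologicalSpace A] [DiscreteTopology A]
    (X : Set (ℤ → A)) (hX : IsSubshiftZ X) (n₀ : ℕ) :
    (∀ u ∈ lang X, ∀ v ∈ lang X,
        ∃ c ∈ lang X, c.length ≤ n₀ ∧ u ++ c ++ v ∈ lang X) ↔
      ((∀ u ∈ lang X, ∀ v ∈ lang X, ∃ w : List A, u ++ w ++ v ∈ lang X) ∧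
        ∀ u ∈ lang X, ∃ c ∈ lang X, c.length ≤ n₀ ∧ u ++ c ++ u ∈ lang X) := by
  constructor
  · intro h
    refine ⟨fun u hu v hv => ?_, fun u hu => h u hu u hu⟩
    obtain ⟨c, hc, _, hcv⟩ := h u hu v hv
    exact ⟨c, hcv⟩
  · rintro ⟨hirr, hself⟩ u hu v hv
    obtain ⟨w, hw⟩ := hirr v hv u hu
    obtain ⟨c, hc, hlen, hcc⟩ := hself (v ++ w ++ u) hw
    refine ⟨c, hc, hlen, ?_⟩
    obtain ⟨x, hx, hap⟩ := hcc
    refine ⟨x, hx, ?_⟩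
    have heq : (v ++ w ++ u) ++ c ++ (v ++ w ++ u)
        = (v ++ w) ++ ((u ++ c ++ v) ++ (w ++ u)) := by
      simp [List.append_assoc]
    rw [heq] at hap
    exact appears_mid hap
end
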